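/- arXiv:1906.09464 — 5 statements merged into one kernel-verified Lean document; each statement's English description precedes it below -/
import Mathlib

section
/- Let φ : X → ℝ be measurable with |||φ|||_β < ∞. Then the minimum over c ∈ ℝ of ‖φ + c‖_β is attained and equals |||φ|||_β; that is, there exists c₀ ∈ ℝ with ‖φ + c₀‖_β = |||φ|||_β, and |||φ|||_β ≤ ‖φ + c‖_β for every c ∈ ℝ. -/
open MeasureTheory ProbabilityTheory ENNReal

noncomputable section

namespace PoissonPaper

variable {X : Type*} [MeasurableSpace X]

/-- The weighted sup-norm `‖φ‖_β = sup_x |φ(x)| / (1 + β V(x))`, valued in `ℝ≥0∞`. -/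
def wnorm (β : ℝ) (V : X → ℝ) (φ : X → ℝ) : ℝ≥0∞ :=
  ⨆ x, ENNReal.ofReal (|φ x| / (1 + β * V x))

open Classical in
/-- The metric `d_β(x,y) = 2 + βV(x) + βV(y)` for `x ≠ y`, `0` on the diagonal. -/
def dBeta (β : ℝ) (V : X → ℝ) (x y : X) : ℝ :=
  if x = y then 0 else 2 + β * V x + β * V y

/-- The oscillation seminorm `|||φ|||_β = sup_{x ≠ y} |φ(x) - φ(y)| / d_β(x,y)`,
valued in `ℝ≥0∞`.  (For `x = y` the quotient is `0/0 = 0`, so the diagonal does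
not contribute.) -/
def osc (β : ℝ) (V : X → ℝ) (φ : X → ℝ) : ℝ≥0∞ :=
  ⨆ x, ⨆ y, ENNReal.ofReal (|φ x - φ y| / dBeta β V x y)

/-- Action of a kernel on functions: `(P*φ)(x) = ∫ φ(y) P(x,dy)`. -/
def act (P : Kernel X X) (φ : X → ℝ) : X → ℝ := fun x => ∫ y, φ y ∂(P x)

/-- Drift inequality `(P*V)(x) ≤ γ V(x) + K`, with the integral taken in the
lower-integral sense (recall `V ≥ 0`). -/
def Drift (P : Kernel X X) (V : X → ℝ) (γ K : ℝ) : Prop :=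
  ∀ x, ∫⁻ y, ENNReal.ofReal (V y) ∂(P x) ≤ ENNReal.ofReal (γ * V x + K)

instance bindIsFinite (μ : Measure X) [IsFiniteMeasure μ] (P : Kernel X X) [IsMarkovKernel P] :
    IsFiniteMeasure (μ.bind P) := by
  constructor
  rw [Measure.bind_apply MeasurableSet.univ (Kernel.measurable P).aemeasurable]
  calc ∫⁻ x, (P x) Set.univ ∂μ = ∫⁻ _, 1 ∂μ := by simp
    _ = μ Set.univ := by simp
    _ < ⊤ := measure_lt_top μ _

/-- The total variation measure `|μ₁ - μ₂|` of the difference of two finite measures. -/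
def tv (μ₁ μ₂ : Measure X) [IsFiniteMeasure μ₁] [IsFiniteMeasure μ₂] : Measure X :=
  (μ₁.toSignedMeasure - μ₂.toSignedMeasure).totalVariation

/-- `σ_β(μ₁, μ₂) = ∫ (1 + βV) d|μ₁ - μ₂|`. -/
def sigmaB (β : ℝ) (V : X → ℝ) (μ₁ μ₂ : Measure X) [IsFiniteMeasure μ₁] [IsFiniteMeasure μ₂] :
    ℝ :=
  ∫ x, (1 + β * V x) ∂(tv μ₁ μ₂)

/-- `σ_β(η) = ∫ (1 + βV) d|η|` for a finite signed measure `η`. -/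
def sigmaS (β : ℝ) (V : X → ℝ) (η : SignedMeasure X) : ℝ :=
  ∫ x, (1 + β * V x) ∂(η.totalVariation)

/-- `n`-fold iterate (power) of a kernel. -/
def kpow (P : Kernel X X) : ℕ → Kernel X X
  | 0 => Kernel.id
  | n + 1 => P ∘ₖ kpow P n

instance kpowIsMarkov (P : Kernel X X) [IsMarkovKernel P] : ∀ n, IsMarkovKernel (kpow P n)
  | 0 => by rw [kpow]; infer_instance
  | n + 1 => by have := kpowIsMarkov P n; rw [kpow]; infer_instance

/-- Action of a (Markov) kernel on finite signed measures, via the Jordan decomposition. -/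
def sbind (P : Kernel X X) [IsMarkovKernel P] (η : SignedMeasure X) : SignedMeasure X :=
  (η.toJordanDecomposition.posPart.bind P).toSignedMeasure -
    (η.toJordanDecomposition.negPart.bind P).toSignedMeasure

/-!
The triangle inequality `|φ x - φ y| ≤ |φ x + c| + |φ y + c|` and `d_β(x, y) = w x + w y` for
`x ≠ y`, where `w = 1 + βV`, give `|||φ|||_β ≤ ‖φ + c‖_β`. Conversely, for `m = |||φ|||_β < ∞`
the intervals `[-φ x - m w x, -φ x + m w x]` meet pairwise, hence (in dimension one) have a common
point `c₀`, and then `‖φ + c₀‖_β ≤ m`. When `|||φ|||_β = ∞` the lower bound forces every shift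
to have infinite norm.
-/

theorem exists_forall_le_and_le_of_forall_le {ι α : Type*} [ConditionallyCompleteLattice α]
    [Nonempty α] {lo hi : ι → α} (h : ∀ i j, lo i ≤ hi j) : ∃ c, ∀ i, lo i ≤ c ∧ c ≤ hi i := by
  rcases isEmpty_or_nonempty ι with _ | _
  · exact ⟨Classical.arbitrary α, isEmptyElim⟩
  · obtain ⟨j⟩ := ‹Nonempty ι›
    have hbdd : BddAbove (Set.range lo) := ⟨hi j, Set.forall_mem_range.2 fun i => h i j⟩
    exact ⟨⨆ i, lo i, fun i => ⟨le_ciSup hbdd i, ciSup_le fun k => h k i⟩⟩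

section Weighted

variable {S : Type*} {β : ℝ} {V : S → ℝ}

theorem dBeta_of_ne {x y : S} (hxy : x ≠ y) :
    dBeta β V x y = (1 + β * V x) + (1 + β * V y) := by
  rw [dBeta, if_neg hxy]
  ring

theorem wnorm_le_ofReal_iff (hw : ∀ x, 0 < 1 + β * V x) {φ : S → ℝ} {m : ℝ} (hm : 0 ≤ m) :
    wnorm β V φ ≤ ENNReal.ofReal m ↔ ∀ x, |φ x| ≤ m * (1 + β * V x) := by
  simp only [wnorm, iSup_le_iff, ENNReal.ofReal_le_ofReal_iff hm, div_le_iff₀ (hw _)]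

theorem osc_le_ofReal_iff (hw : ∀ x, 0 < 1 + β * V x) {φ : S → ℝ} {m : ℝ} (hm : 0 ≤ m) :
    osc β V φ ≤ ENNReal.ofReal m ↔
      ∀ x y, |φ x - φ y| ≤ m * ((1 + β * V x) + (1 + β * V y)) := by
  simp only [osc, iSup_le_iff, ENNReal.ofReal_le_ofReal_iff hm]
  refine forall₂_congr fun x y => ?_
  rcases eq_or_ne x y with rfl | hxy
  · simp only [sub_self, abs_zero, zero_div, hm, true_iff]
    exact mul_nonneg hm (add_pos (hw x) (hw x)).le
  · rw [dBeta_of_ne hxy, div_le_iff₀ (by linarith [hw x, hw y])]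

theorem osc_le_wnorm_add_const (hw : ∀ x, 0 < 1 + β * V x) (φ : S → ℝ) (c : ℝ) :
    osc β V φ ≤ wnorm β V (fun x => φ x + c) := by
  rcases eq_or_ne (wnorm β V (fun x => φ x + c)) ⊤ with htop | hfin
  · exact htop ▸ le_top
  set m := (wnorm β V (fun x => φ x + c)).toReal
  have hbound := (wnorm_le_ofReal_iff hw ENNReal.toReal_nonneg).1 (ENNReal.ofReal_toReal hfin).ge
  rw [← ENNReal.ofReal_toReal hfin, osc_le_ofReal_iff hw ENNReal.toReal_nonneg]
  intro x y
  calc |φ x - φ y| = |(φ x + c) - (φ y + c)| := by ring_nf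
    _ ≤ |φ x + c| + |φ y + c| := abs_sub _ _
    _ ≤ m * (1 + β * V x) + m * (1 + β * V y) := add_le_add (hbound x) (hbound y)
    _ = m * ((1 + β * V x) + (1 + β * V y)) := by ring

theorem exists_wnorm_add_const_le_osc (hw : ∀ x, 0 < 1 + β * V x) {φ : S → ℝ}
    (hfin : osc β V φ ≠ ⊤) : ∃ c, wnorm β V (fun x => φ x + c) ≤ osc β V φ := by
  set m := (osc β V φ).toReal
  have hm : 0 ≤ m := ENNReal.toReal_nonneg
  have hosc := (osc_le_ofReal_iff hw hm).1 (ENNReal.ofReal_toReal hfin).ge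
  obtain ⟨c, hc⟩ := exists_forall_le_and_le_of_forall_le
    (lo := fun x => -φ x - m * (1 + β * V x)) (hi := fun x => m * (1 + β * V x) - φ x)
    fun x y => by linarith [neg_abs_le (φ x - φ y), hosc x y]
  refine ⟨c, ?_⟩
  rw [← ENNReal.ofReal_toReal hfin, wnorm_le_ofReal_iff hw hm]
  exact fun x => abs_le.2 ⟨by linarith [hc x], by linarith [hc x]⟩

end Weighted

theorem oscillation_eq_min_shifted_norm_general
    {X : Type*} (V : X → ℝ)
    (hV0 : ∀ x, 0 ≤ V x) (β : ℝ) (hβ : 0 < β)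
    (φ : X → ℝ) :
    (∃ c₀ : ℝ, wnorm β V (fun x => φ x + c₀) = osc β V φ) ∧
      ∀ c : ℝ, osc β V φ ≤ wnorm β V (fun x => φ x + c) := by
  have hw : ∀ x, 0 < 1 + β * V x := fun x =>
    add_pos_of_pos_of_nonneg one_pos (mul_nonneg hβ.le (hV0 x))
  obtain ⟨c, hc⟩ : ∃ c, wnorm β V (fun x => φ x + c) ≤ osc β V φ := by
    rcases eq_or_ne (osc β V φ) ⊤ with htop | hfin
    · exact ⟨0, htop ▸ le_top⟩
    · exact exists_wnorm_add_const_le_osc hw hfin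
  exact ⟨⟨c, le_antisymm hc (osc_le_wnorm_add_const hw φ c)⟩, osc_le_wnorm_add_const hw φ⟩

/-- The minimum over `c ∈ ℝ` of `‖φ + c‖_β` is attained and equals
`|||φ|||_β`. -/
theorem oscillation_eq_min_shifted_norm
    {X : Type*} [MeasurableSpace X] (V : X → ℝ) (hVmeas : Measurable V)
    (hV0 : ∀ x, 0 ≤ V x) (β : ℝ) (hβ : 0 < β)
    (φ : X → ℝ) (hφ : Measurable φ) (hfin : osc β V φ < ⊤) :
    (∃ c₀ : ℝ, wnorm β V (fun x => φ x + c₀) = osc β V φ) ∧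
      ∀ c : ℝ, osc β V φ ≤ wnorm β V (fun x => φ x + c) :=
  oscillation_eq_min_shifted_norm_general V hV0 β hβ φ

end PoissonPaper
end
end

section
/- For any two probability measures μ₁, μ₂ on X with ∫ V dμ₁ < ∞ and ∫ V dμ₂ < ∞, the three quantities ∫ (1 + βV) d|μ₁ − μ₂|, sup{∫ φ d(μ₁ − μ₂) : ‖φ‖_β ≤ 1}, and sup{∫ φ d(μ₁ − μ₂) : |||φ|||_β ≤ 1} are all equal, where |μ₁ − μ₂| denotes the total variation measure of the signed measure μ₁ − μ₂. -/
open MeasureTheory ProbabilityTheory ENNReal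

noncomputable section

namespace PoissonPaper

variable {X : Type*} [MeasurableSpace X]

/-! The dual test function is `±(1 + βV)`, with the sign taken from a Hahn decomposition of
`μ₁ - μ₂`; this attains `∫ (1 + βV) d|μ₁ - μ₂|`, and the bound `|φ| ≤ 1 + βV` shows that nothing
does better. A function of oscillation at most one becomes one of weighted norm at most one after
subtracting the constant `sup (φ - 1 - βV)`, which changes nothing since `μ₁` and `μ₂` have the same
mass. -/

def integralDiffs (μ ν : Measure X) (C : Set (X → ℝ)) : Set ℝ :=
  {r | ∃ φ : X → ℝ, Measurable φ ∧ φ ∈ C ∧ r = ∫ x, φ x ∂μ - ∫ x, φ x ∂ν}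

section FiniteMeasures

variable {μ ν : Measure X} [IsFiniteMeasure μ] [IsFiniteMeasure ν]

theorem tv_eq_sub_add_sub : tv μ ν = (μ - ν) + (ν - μ) := by
  simp [tv, SignedMeasure.totalVariation, Measure.jordanDecompositionOfToSignedMeasureSub]

theorem add_sub_eq_add_sub : μ + (ν - μ) = ν + (μ - ν) := by
  rw [← Measure.toSignedMeasure_eq_toSignedMeasure_iff, Measure.toSignedMeasure_add,
    Measure.toSignedMeasure_add, add_comm ν.toSignedMeasure, ← sub_eq_sub_iff_add_eq_add]
  exact Measure.sub_toSignedMeasure_eq_toSignedMeasure_sub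

theorem integral_sub_integral_eq {ψ : X → ℝ} (hψμ : Integrable ψ μ) (hψν : Integrable ψ ν) :
    ∫ x, ψ x ∂μ - ∫ x, ψ x ∂ν = ∫ x, ψ x ∂(μ - ν) - ∫ x, ψ x ∂(ν - μ) := by
  have h : ∫ x, ψ x ∂(μ + (ν - μ)) = ∫ x, ψ x ∂(ν + (μ - ν)) := by rw [add_sub_eq_add_sub]
  rw [integral_add_measure hψμ (hψν.mono_measure Measure.sub_le),
    integral_add_measure hψν (hψμ.mono_measure Measure.sub_le)] at h
  linarith

variable {g : X → ℝ}

theorem integral_sub_integral_le_integral_tv (hgμ : Integrable g μ) (hgν : Integrable g ν)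
    {ψ : X → ℝ} (hψ : Measurable ψ) (hψg : ∀ x, |ψ x| ≤ g x) :
    ∫ x, ψ x ∂μ - ∫ x, ψ x ∂ν ≤ ∫ x, g x ∂(tv μ ν) := by
  have hgμν : Integrable g (μ - ν) := hgμ.mono_measure Measure.sub_le
  have hgνμ : Integrable g (ν - μ) := hgν.mono_measure Measure.sub_le
  have hψint {m : Measure X} (hgm : Integrable g m) : Integrable ψ m :=
    hgm.mono' hψ.aestronglyMeasurable (ae_of_all _ hψg)
  have hpos : ∫ x, ψ x ∂(μ - ν) ≤ ∫ x, g x ∂(μ - ν) :=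
    integral_mono (hψint hgμν) hgμν fun x => (abs_le.mp (hψg x)).2
  have hneg : -∫ x, ψ x ∂(ν - μ) ≤ ∫ x, g x ∂(ν - μ) := by
    rw [← integral_neg]
    exact integral_mono (hψint hgνμ).neg hgνμ fun x => (neg_le_abs _).trans (hψg x)
  rw [integral_sub_integral_eq (hψint hgμ) (hψint hgν), tv_eq_sub_add_sub,
    integral_add_measure hgμν hgνμ]
  linarith

theorem exists_integral_sub_integral_eq_integral_tv (hgμ : Integrable g μ) (hgν : Integrable g ν)
    (hg : Measurable g) (hg0 : 0 ≤ g) :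
    ∃ ψ : X → ℝ, Measurable ψ ∧ (∀ x, |ψ x| ≤ g x) ∧
      ∫ x, ψ x ∂μ - ∫ x, ψ x ∂ν = ∫ x, g x ∂(tv μ ν) := by
  classical
  obtain ⟨s, hs, hμν, hνμ⟩ := Measure.mutually_singular_measure_sub (μ := μ) (ν := ν)
  have hψg : ∀ x, |s.piecewise (-g) g x| ≤ g x := fun x => by
    by_cases hx : x ∈ s <;> simp [hx, abs_of_nonneg (hg0 x)]
  have hψint {m : Measure X} (hgm : Integrable g m) : Integrable (s.piecewise (-g) g) m :=
    hgm.mono' (hg.neg.piecewise hs hg).aestronglyMeasurable (ae_of_all _ hψg)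
  have hpos : ∫ x, s.piecewise (-g) g x ∂(μ - ν) = ∫ x, g x ∂(μ - ν) := by
    refine integral_congr_ae ?_
    filter_upwards [measure_eq_zero_iff_ae_notMem.mp hμν] with x hx
    simp [hx]
  have hneg : ∫ x, s.piecewise (-g) g x ∂(ν - μ) = -∫ x, g x ∂(ν - μ) := by
    rw [← integral_neg]
    refine integral_congr_ae ?_
    filter_upwards [measure_eq_zero_iff_ae_notMem.mp hνμ] with x hx
    simp [not_not.mp hx]
  refine ⟨s.piecewise (-g) g, hg.neg.piecewise hs hg, hψg, ?_⟩
  rw [integral_sub_integral_eq (hψint hgμ) (hψint hgν), hpos, hneg, tv_eq_sub_add_sub,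
    integral_add_measure (hgμ.mono_measure Measure.sub_le) (hgν.mono_measure Measure.sub_le)]
  ring

theorem isGreatest_integralDiffs_abs_le (hgμ : Integrable g μ) (hgν : Integrable g ν)
    (hg : Measurable g) (hg0 : 0 ≤ g) :
    IsGreatest (integralDiffs μ ν {ψ | ∀ x, |ψ x| ≤ g x}) (∫ x, g x ∂(tv μ ν)) := by
  obtain ⟨ψ, hψ, hψg, hψeq⟩ := exists_integral_sub_integral_eq_integral_tv hgμ hgν hg hg0
  refine ⟨⟨ψ, hψ, hψg, hψeq.symm⟩, ?_⟩
  rintro _ ⟨φ, hφ, hφg, rfl⟩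
  exact integral_sub_integral_le_integral_tv hgμ hgν hφ hφg

end FiniteMeasures

theorem exists_abs_sub_le_of_abs_sub_le_add {α : Type*} {φ g : α → ℝ}
    (h : ∀ x y, |φ x - φ y| ≤ g x + g y) : ∃ c, ∀ x, |φ x - c| ≤ g x := by
  refine ⟨⨆ x, (φ x - g x), fun y => abs_le.mpr ⟨?_, ?_⟩⟩
  · have : Nonempty α := ⟨y⟩
    have : (⨆ x, (φ x - g x)) ≤ φ y + g y :=
      ciSup_le fun x => by linarith [(abs_le.mp (h x y)).2]
    linarith
  · have hbdd : BddAbove (Set.range fun x => φ x - g x) :=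
      ⟨φ y + g y, by rintro _ ⟨x, rfl⟩; linarith [(abs_le.mp (h x y)).2]⟩
    linarith [le_ciSup hbdd y]

theorem integralDiffs_abs_sub_le_add {μ ν : Measure X} [IsFiniteMeasure μ] [IsFiniteMeasure ν]
    (hμν : μ Set.univ = ν Set.univ) {g : X → ℝ} (hgμ : Integrable g μ) (hgν : Integrable g ν) :
    integralDiffs μ ν {φ | ∀ x y, |φ x - φ y| ≤ g x + g y} =
      integralDiffs μ ν {ψ | ∀ x, |ψ x| ≤ g x} := by
  ext r
  constructor
  · rintro ⟨φ, hφ, hφg, rfl⟩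
    obtain ⟨c, hc⟩ := exists_abs_sub_le_of_abs_sub_le_add hφg
    have hφint {m : Measure X} [IsFiniteMeasure m] (hgm : Integrable g m) : Integrable φ m := by
      have hsub : Integrable (fun x => φ x - c) m :=
        hgm.mono' (hφ.sub_const c).aestronglyMeasurable (ae_of_all _ hc)
      exact (hsub.add (integrable_const c)).congr (ae_of_all _ fun x => sub_add_cancel (φ x) c)
    refine ⟨fun x => φ x - c, hφ.sub_const c, hc, ?_⟩
    rw [integral_sub (hφint hgμ) (integrable_const c), integral_sub (hφint hgν) (integrable_const c),
      integral_const, integral_const, measureReal_def, measureReal_def, hμν]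
    ring
  · rintro ⟨ψ, hψ, hψg, rfl⟩
    exact ⟨ψ, hψ, fun x y => (abs_sub _ _).trans (add_le_add (hψg x) (hψg y)), rfl⟩

section WeightedNorms

variable {α : Type*} {β : ℝ} {V φ : α → ℝ}

theorem wnorm_le_one_iff (hpos : ∀ x, 0 < 1 + β * V x) :
    wnorm β V φ ≤ 1 ↔ ∀ x, |φ x| ≤ 1 + β * V x := by
  simp only [wnorm, iSup_le_iff, ENNReal.ofReal_le_one, div_le_one (hpos _)]

theorem osc_le_one_iff (hpos : ∀ x, 0 < 1 + β * V x) :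
    osc β V φ ≤ 1 ↔ ∀ x y, |φ x - φ y| ≤ (1 + β * V x) + (1 + β * V y) := by
  simp only [osc, iSup_le_iff, ENNReal.ofReal_le_one]
  refine forall₂_congr fun x y => ?_
  by_cases hxy : x = y
  · subst hxy
    simp [dBeta, (hpos x).le]
  · have hd : dBeta β V x y = (1 + β * V x) + (1 + β * V y) := by
      rw [dBeta, if_neg hxy]; ring
    rw [hd, div_le_one (by linarith [hpos x, hpos y])]

end WeightedNorms

/-- The weighted total variation distance coincides with the two dual
sup formulations. -/
theorem weighted_tv_three_expressions
    {X : Type*} [MeasurableSpace X] (V : X → ℝ) (hVmeas : Measurable V)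
    (hV0 : ∀ x, 0 ≤ V x) (β : ℝ) (hβ : 0 < β)
    (μ₁ μ₂ : Measure X) [IsProbabilityMeasure μ₁] [IsProbabilityMeasure μ₂]
    (h₁ : Integrable V μ₁) (h₂ : Integrable V μ₂) :
    sSup {r : ℝ | ∃ φ : X → ℝ, Measurable φ ∧ wnorm β V φ ≤ 1 ∧
        r = ∫ x, φ x ∂μ₁ - ∫ x, φ x ∂μ₂} = ∫ x, (1 + β * V x) ∂(tv μ₁ μ₂) ∧
      sSup {r : ℝ | ∃ φ : X → ℝ, Measurable φ ∧ osc β V φ ≤ 1 ∧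
        r = ∫ x, φ x ∂μ₁ - ∫ x, φ x ∂μ₂} = ∫ x, (1 + β * V x) ∂(tv μ₁ μ₂) := by
  have hpos : ∀ x, 0 < 1 + β * V x := fun x => by have := hV0 x; positivity
  have hg₁ : Integrable (fun x => 1 + β * V x) μ₁ := (integrable_const 1).add (h₁.const_mul β)
  have hg₂ : Integrable (fun x => 1 + β * V x) μ₂ := (integrable_const 1).add (h₂.const_mul β)
  have hwnorm : {φ | wnorm β V φ ≤ 1} = {φ | ∀ x, |φ x| ≤ 1 + β * V x} :=
    Set.ext fun _ => wnorm_le_one_iff hpos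
  have hosc : {φ | osc β V φ ≤ 1} = {φ | ∀ x y, |φ x - φ y| ≤ (1 + β * V x) + (1 + β * V y)} :=
    Set.ext fun _ => osc_le_one_iff hpos
  have hmax := isGreatest_integralDiffs_abs_le hg₁ hg₂ (measurable_const.add
    (hVmeas.const_mul β)) fun x => (hpos x).le
  change sSup (integralDiffs μ₁ μ₂ {φ | wnorm β V φ ≤ 1}) = _ ∧
    sSup (integralDiffs μ₁ μ₂ {φ | osc β V φ ≤ 1}) = _
  rw [hwnorm, hosc, integralDiffs_abs_sub_le_add (by simp) hg₁ hg₂]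
  exact ⟨hmax.csSup_eq, hmax.csSup_eq⟩

end PoissonPaper
end
end

section
/- Let α₀ ∈ (0, ᾱ) and γ₀ ∈ (γ + 2K/R, 1), set β = α₀/K and α = max(1 − (ᾱ − α₀), (2 + Rβγ₀)/(2 + Rβ)). Then γ < α < 1, and for every θ ∈ Θ and every measurable φ : X → ℝ with |||φ|||_β < ∞ one has |||P_θ*φ|||_β ≤ α |||φ|||_β. -/
/-!
Centre `φ` at a constant `c` with `|φ - c| ≤ M (1 + βV)`, where `M = |||φ|||_β`. If `x` and `y`
both lie in the small set `C`, the common part `ᾱ μ̄` of `P(x, ·)` and `P(y, ·)` cancels in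
`P*φ(x) - P*φ(y)`, leaving mass `1 - ᾱ` plus the drift of `V`; the choice `β = α₀ / K` turns the
constant `K` of the drift into `α₀`. Otherwise `V(x) + V(y) ≥ R`, and the drift alone shrinks
`2 + βV(x) + βV(y)` by the factor `(2 + Rβγ₀) / (2 + Rβ)`.
-/

open MeasureTheory ProbabilityTheory ENNReal

noncomputable section

namespace PoissonPaper

variable {X : Type*}

section Oscillation

variable {β : ℝ} {V φ : X → ℝ}

lemma abs_sub_le_toReal_osc_mul (hβ : 0 ≤ β) (hV0 : ∀ x, 0 ≤ V x) (hosc : osc β V φ ≠ ⊤)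
    (u v : X) : |φ u - φ v| ≤ (osc β V φ).toReal * (2 + β * V u + β * V v) := by
  have hd : 0 < 2 + β * V u + β * V v := by
    nlinarith [mul_nonneg hβ (hV0 u), mul_nonneg hβ (hV0 v)]
  by_cases huv : u = v
  · subst huv
    simpa using mul_nonneg ENNReal.toReal_nonneg hd.le
  · have hle : ENNReal.ofReal (|φ u - φ v| / dBeta β V u v) ≤ osc β V φ :=
      le_iSup₂ (f := fun x y => ENNReal.ofReal (|φ x - φ y| / dBeta β V x y)) u v
    rwa [ENNReal.ofReal_le_iff_le_toReal hosc, dBeta, if_neg huv, div_le_iff₀ hd] at hle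

lemma osc_le_ofReal_of_abs_sub_le (hβ : 0 ≤ β) (hV0 : ∀ x, 0 ≤ V x) {C : ℝ}
    (h : ∀ x y, |φ x - φ y| ≤ C * (2 + β * V x + β * V y)) : osc β V φ ≤ ENNReal.ofReal C := by
  refine iSup₂_le fun x y => ?_
  by_cases hxy : x = y
  · simp [hxy, dBeta]
  · have hd : 0 < 2 + β * V x + β * V y := by
      nlinarith [mul_nonneg hβ (hV0 x), mul_nonneg hβ (hV0 y)]
    rw [dBeta, if_neg hxy]
    exact ENNReal.ofReal_le_ofReal ((div_le_iff₀ hd).2 (h x y))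

end Oscillation

lemma exists_forall_le_le_of_forall_le {ι : Type*} {f g : ι → ℝ} (h : ∀ u v, f u ≤ g v) :
    ∃ c, (∀ u, f u ≤ c) ∧ ∀ v, c ≤ g v := by
  rcases isEmpty_or_nonempty ι with hι | hι
  · exact ⟨0, isEmptyElim, isEmptyElim⟩
  · have hbdd : BddAbove (Set.range f) :=
      ⟨g hι.some, Set.forall_mem_range.2 fun u => h u hι.some⟩
    exact ⟨⨆ u, f u, fun u => le_ciSup hbdd u, fun v => ciSup_le fun u => h u v⟩

lemma exists_abs_sub_le_of_abs_sub_le {β M : ℝ} {V φ : X → ℝ}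
    (h : ∀ u v, |φ u - φ v| ≤ M * (2 + β * V u + β * V v)) :
    ∃ c, ∀ u, |φ u - c| ≤ M * (1 + β * V u) := by
  obtain ⟨c, hlow, hup⟩ := exists_forall_le_le_of_forall_le
    (f := fun u => φ u - M * (1 + β * V u)) (g := fun v => φ v + M * (1 + β * V v))
    fun u v => by linarith [le_of_abs_le (h u v)]
  exact ⟨c, fun u => abs_le.2 ⟨by linarith [hup u], by linarith [hlow u]⟩⟩

section WeightedIntegral

variable [MeasurableSpace X] {V ψ : X → ℝ} {M β : ℝ} {m : Measure X} [IsFiniteMeasure m]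

lemma integrable_weight (hV : Measurable V) (hV0 : ∀ x, 0 ≤ V x)
    (hfin : ∫⁻ u, ENNReal.ofReal (V u) ∂m ≠ ⊤) : Integrable (fun u => M * (1 + β * V u)) m :=
  ((integrable_const 1).add
    (((lintegral_ofReal_ne_top_iff_integrable hV.aestronglyMeasurable (ae_of_all _ hV0)).1
      hfin).const_mul β)).const_mul M

lemma integrable_of_abs_le_weight (hV : Measurable V) (hV0 : ∀ x, 0 ≤ V x)
    (hψ : Measurable ψ) (hψb : ∀ u, |ψ u| ≤ M * (1 + β * V u))
    (hfin : ∫⁻ u, ENNReal.ofReal (V u) ∂m ≠ ⊤) : Integrable ψ m :=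
  (integrable_weight hV hV0 hfin).mono' hψ.aestronglyMeasurable (ae_of_all _ hψb)

lemma abs_integral_le_of_abs_le_weight (hV : Measurable V) (hV0 : ∀ x, 0 ≤ V x)
    (hψ : Measurable ψ) (hψb : ∀ u, |ψ u| ≤ M * (1 + β * V u)) (hM : 0 ≤ M) (hβ : 0 ≤ β)
    {b : ℝ} (hb : 0 ≤ b) (hVb : ∫⁻ u, ENNReal.ofReal (V u) ∂m ≤ ENNReal.ofReal b) :
    |∫ u, ψ u ∂m| ≤ M * (m.real Set.univ + β * b) := by
  have hfin : ∫⁻ u, ENNReal.ofReal (V u) ∂m ≠ ⊤ := ne_top_of_le_ne_top ofReal_ne_top hVb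
  have hVint : Integrable V m :=
    (lintegral_ofReal_ne_top_iff_integrable hV.aestronglyMeasurable (ae_of_all _ hV0)).1 hfin
  have hVle : ∫ u, V u ∂m ≤ b := by
    rw [integral_eq_lintegral_of_nonneg_ae (ae_of_all _ hV0) hV.aestronglyMeasurable]
    exact ENNReal.toReal_le_of_le_ofReal hb hVb
  calc |∫ u, ψ u ∂m| ≤ ∫ u, M * (1 + β * V u) ∂m :=
        abs_integral_le_integral_abs.trans <| integral_mono
          (integrable_of_abs_le_weight hV hV0 hψ hψb hfin).abs (integrable_weight hV hV0 hfin) hψb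
    _ = M * (m.real Set.univ + β * ∫ u, V u ∂m) := by
        rw [integral_const_mul, integral_add (integrable_const 1) (hVint.const_mul β),
          integral_const_mul, integral_const, smul_eq_mul, mul_one]
    _ ≤ M * (m.real Set.univ + β * b) := by gcongr

lemma abs_integral_sub_integral_le_of_le (hV : Measurable V) (hV0 : ∀ x, 0 ≤ V x)
    (hψ : Measurable ψ) (hψb : ∀ u, |ψ u| ≤ M * (1 + β * V u)) (hM : 0 ≤ M) (hβ : 0 ≤ β)
    {ν : Measure X} (hν : ν ≤ m) {b : ℝ} (hb : 0 ≤ b)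
    (hVb : ∫⁻ u, ENNReal.ofReal (V u) ∂m ≤ ENNReal.ofReal b) :
    |∫ u, ψ u ∂m - ∫ u, ψ u ∂ν| ≤ M * (m.real Set.univ - ν.real Set.univ + β * b) := by
  have : IsFiniteMeasure ν := isFiniteMeasure_of_le m hν
  have hdec : m - ν + ν = m := Measure.sub_add_cancel_of_le hν
  have hint := integrable_add_measure.1 <| hdec.symm ▸
    integrable_of_abs_le_weight hV hV0 hψ hψb (ne_top_of_le_ne_top ofReal_ne_top hVb)
  have hsplit : ∫ u, ψ u ∂m - ∫ u, ψ u ∂ν = ∫ u, ψ u ∂(m - ν) := by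
    conv_lhs => rw [← hdec]
    rw [integral_add_measure hint.1 hint.2, add_sub_cancel_right]
  have hmass : (m - ν).real Set.univ = m.real Set.univ - ν.real Set.univ := by
    rw [measureReal_def, Measure.sub_apply MeasurableSet.univ hν,
      ENNReal.toReal_sub_of_le (hν Set.univ) (measure_ne_top m _), measureReal_def, measureReal_def]
  rw [hsplit, ← hmass]
  exact abs_integral_le_of_abs_le_weight hV hV0 hψ hψb hM hβ hb
    ((lintegral_mono' Measure.sub_le le_rfl).trans hVb)

end WeightedIntegral

section Kernel

variable [MeasurableSpace X] {P : Kernel X X} [IsMarkovKernel P]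

lemma act_add_const {ψ : X → ℝ} {x : X} (hψ : Integrable ψ (P x)) (c : ℝ) :
    act P (fun u => ψ u + c) x = act P ψ x + c := by
  simp [act, integral_add hψ (integrable_const c)]

lemma abs_act_sub_act_le {V ψ : X → ℝ} {M β γ K R α : ℝ} {ν : Measure X}
    (hV : Measurable V) (hV0 : ∀ x, 0 ≤ V x) (hψ : Measurable ψ)
    (hψb : ∀ u, |ψ u| ≤ M * (1 + β * V u)) (hM : 0 ≤ M) (hβ : 0 ≤ β) (hγ : 0 ≤ γ) (hK : 0 ≤ K)
    (hdrift : Drift P V γ K) (hminor : ∀ x, V x ≤ R → ν ≤ P x)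
    (hsmall : ∀ s, 0 ≤ s → 2 * (1 - ν.real Set.univ) + β * (γ * s + 2 * K) ≤ α * (2 + β * s))
    (hlarge : ∀ s, R ≤ s → 2 + β * (γ * s + 2 * K) ≤ α * (2 + β * s)) (x y : X) :
    |act P ψ x - act P ψ y| ≤ α * M * (2 + β * V x + β * V y) := by
  have hb : ∀ x, 0 ≤ γ * V x + K := fun x => by nlinarith [hV0 x]
  have hnear : ∀ x, V x ≤ R →
      |act P ψ x - ∫ u, ψ u ∂ν| ≤ M * (1 - ν.real Set.univ + β * (γ * V x + K)) := fun x hx => by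
    simpa [act] using abs_integral_sub_integral_le_of_le hV hV0 hψ hψb hM hβ (hminor x hx) (hb x)
      (hdrift x)
  have hfar : ∀ x, |act P ψ x| ≤ M * (1 + β * (γ * V x + K)) := fun x => by
    simpa [act] using abs_integral_le_of_abs_le_weight hV hV0 hψ hψb hM hβ (hb x) (hdrift x)
  by_cases hxy : V x ≤ R ∧ V y ≤ R
  · calc |act P ψ x - act P ψ y|
        ≤ |act P ψ x - ∫ u, ψ u ∂ν| + |act P ψ y - ∫ u, ψ u ∂ν| := by
          simpa only [Real.dist_eq] using dist_triangle_right _ _ (∫ u, ψ u ∂ν)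
      _ ≤ M * (1 - ν.real Set.univ + β * (γ * V x + K))
          + M * (1 - ν.real Set.univ + β * (γ * V y + K)) :=
          add_le_add (hnear x hxy.1) (hnear y hxy.2)
      _ = M * (2 * (1 - ν.real Set.univ) + β * (γ * (V x + V y) + 2 * K)) := by ring
      _ ≤ M * (α * (2 + β * (V x + V y))) := by gcongr; exact hsmall _ (add_nonneg (hV0 x) (hV0 y))
      _ = α * M * (2 + β * V x + β * V y) := by ring
  · have hs : R ≤ V x + V y := by
      rw [not_and_or, not_le, not_le] at hxy
      rcases hxy with h | h <;> linarith [hV0 x, hV0 y]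
    calc |act P ψ x - act P ψ y| ≤ |act P ψ x| + |act P ψ y| := abs_sub _ _
      _ ≤ M * (1 + β * (γ * V x + K)) + M * (1 + β * (γ * V y + K)) :=
          add_le_add (hfar x) (hfar y)
      _ = M * (2 + β * (γ * (V x + V y) + 2 * K)) := by ring
      _ ≤ M * (α * (2 + β * (V x + V y))) := by gcongr; exact hlarge _ hs
      _ = α * M * (2 + β * V x + β * V y) := by ring

end Kernel

lemma contraction_constants {γ K R αbar α₀ γ₀ β α : ℝ} (hγ : γ < 1) (hK : 0 < K)
    (hR : 2 * K / (1 - γ) < R) (hα₀ : α₀ ∈ Set.Ioo 0 αbar) (hγ₀ : γ₀ ∈ Set.Ioo (γ + 2 * K / R) 1)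
    (hβ : β = α₀ / K) (hα : α = max (1 - (αbar - α₀)) ((2 + R * β * γ₀) / (2 + R * β))) :
    γ < α ∧ α < 1 ∧
      (∀ s, 0 ≤ s → 2 * (1 - αbar) + β * (γ * s + 2 * K) ≤ α * (2 + β * s)) ∧
      (∀ s, R ≤ s → 2 + β * (γ * s + 2 * K) ≤ α * (2 + β * s)) := by
  obtain ⟨hα₀, hα₀αbar⟩ := hα₀
  have hR0 : 0 < R := (div_pos (by linarith) (by linarith)).trans hR
  have hβ0 : 0 < β := hβ ▸ div_pos hα₀ hK
  have hβK : β * K = α₀ := by rw [hβ]; field_simp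
  have h2K : 2 * K < (γ₀ - γ) * R := by
    rw [← div_lt_iff₀ hR0]; linarith [hγ₀.1]
  have hγγ₀ : γ < γ₀ := by linarith [hγ₀.1, div_pos (by linarith : 0 < 2 * K) hR0]
  have hden : 0 < 2 + R * β := by positivity
  have hαleft : 1 - (αbar - α₀) ≤ α := hα ▸ le_max_left _ _
  have hαright : 2 + R * β * γ₀ ≤ α * (2 + R * β) := by
    rw [← div_le_iff₀ hden]; exact hα ▸ le_max_right _ _
  have hγα : γ < α := by
    nlinarith [mul_pos hR0 hβ0, mul_pos hR0 (mul_pos hβ0 (sub_pos.2 hγγ₀))]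
  refine ⟨hγα, ?_, fun s hs => ?_, fun s hs => ?_⟩
  · rw [hα]
    exact max_lt (by linarith) ((div_lt_one hden).2 (by nlinarith [mul_pos hR0 hβ0, hγ₀.2]))
  · nlinarith [mul_le_mul_of_nonneg_right hγα.le (mul_nonneg hβ0.le hs)]
  · -- `s ↦ (2 + βγ₀s) / (2 + βs)` is decreasing, so its value at `R` bounds it beyond `R`
    have hshift : β * (γ * s + 2 * K) ≤ β * γ₀ * s := by
      nlinarith [mul_le_mul_of_nonneg_left hs (sub_nonneg.2 hγγ₀.le)]
    have hmono : (2 + β * γ₀ * s) * (2 + R * β) ≤ (2 + R * β * γ₀) * (2 + β * s) := by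
      nlinarith [mul_nonneg (mul_nonneg hβ0.le (by linarith [hγ₀.2] : 0 ≤ 1 - γ₀))
        (by linarith : 0 ≤ s - R)]
    have hstep : (2 + β * γ₀ * s) * (2 + R * β) ≤ α * (2 + β * s) * (2 + R * β) := by
      nlinarith [mul_le_mul_of_nonneg_right hαright (by nlinarith : 0 ≤ 2 + β * s)]
    linarith [le_of_mul_le_mul_right hstep hden]

theorem oscillation_contraction_uniform_general
    {X : Type*} [MeasurableSpace X] {k : ℕ} {Θ : Set (EuclideanSpace ℝ (Fin k))}
    (P : Θ → Kernel X X) [∀ θ, IsMarkovKernel (P θ)]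
    (V : X → ℝ) (hVmeas : Measurable V) (hV0 : ∀ x, 0 ≤ V x)
    (γ K : ℝ) (hγ : γ ∈ Set.Ioo (0:ℝ) 1) (hK : 0 < K)
    (hdrift : ∀ θ, Drift (P θ) V γ K)
    (R : ℝ) (hR : 2 * K / (1 - γ) < R)
    (μbar : Measure X) [IsProbabilityMeasure μbar]
    (αbar : ℝ) (hαbar : αbar ∈ Set.Ioo (0:ℝ) 1)
    (hminor : ∀ θ, ∀ x, V x ≤ R → ∀ A : Set X, MeasurableSet A →
      ENNReal.ofReal αbar * μbar A ≤ (P θ) x A)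
    (α₀ : ℝ) (hα₀ : α₀ ∈ Set.Ioo 0 αbar)
    (γ₀ : ℝ) (hγ₀ : γ₀ ∈ Set.Ioo (γ + 2 * K / R) 1)
    (β : ℝ) (hβ : β = α₀ / K)
    (α : ℝ) (hα : α = max (1 - (αbar - α₀)) ((2 + R * β * γ₀) / (2 + R * β))) :
    γ < α ∧ α < 1 ∧
      ∀ θ, ∀ φ : X → ℝ, Measurable φ → osc β V φ < ⊤ →
        osc β V (act (P θ) φ) ≤ ENNReal.ofReal α * osc β V φ := by
  obtain ⟨hγα, hα1, hsmall, hlarge⟩ := contraction_constants hγ.2 hK hR hα₀ hγ₀ hβ hα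
  have hβ0 : 0 ≤ β := hβ ▸ div_nonneg hα₀.1.le hK.le
  have hmass : (ENNReal.ofReal αbar • μbar).real Set.univ = αbar := by simp [hαbar.1.le]
  refine ⟨hγα, hα1, fun θ φ hφ hosc => ?_⟩
  set M := (osc β V φ).toReal
  obtain ⟨c, hc⟩ := exists_abs_sub_le_of_abs_sub_le (abs_sub_le_toReal_osc_mul hβ0 hV0 hosc.ne)
  have hψ : Measurable fun u => φ u - c := hφ.sub_const c
  have hact : ∀ x, act (P θ) φ x = act (P θ) (fun u => φ u - c) x + c := fun x => by
    rw [← act_add_const (integrable_of_abs_le_weight hVmeas hV0 hψ hc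
      (ne_top_of_le_ne_top ofReal_ne_top (hdrift θ x)))]
    simp
  have hcontr : ∀ x y, |act (P θ) φ x - act (P θ) φ y| ≤ α * M * (2 + β * V x + β * V y) := by
    intro x y
    rw [hact x, hact y, add_sub_add_right_eq_sub]
    refine abs_act_sub_act_le hVmeas hV0 hψ hc ENNReal.toReal_nonneg hβ0 hγ.1.le hK.le
      (hdrift θ) (fun x hx => Measure.le_iff.2 fun A hA => ?_) (hmass ▸ hsmall) hlarge x y
    simpa using hminor θ x hx A hA
  calc osc β V (act (P θ) φ) ≤ ENNReal.ofReal (α * M) :=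
        osc_le_ofReal_of_abs_sub_le hβ0 hV0 hcontr
    _ = ENNReal.ofReal α * osc β V φ := by
        rw [ENNReal.ofReal_mul (hγ.1.trans hγα).le, ENNReal.ofReal_toReal hosc.ne]

/-- Hairer–Mattingly contraction of the oscillation seminorm, with explicit
constants, uniform in the parameter. -/
theorem oscillation_contraction_uniform
    {X : Type*} [MeasurableSpace X] {k : ℕ} {Θ : Set (EuclideanSpace ℝ (Fin k))}
    (hΘ : Θ.Nonempty) (P : Θ → Kernel X X) [∀ θ, IsMarkovKernel (P θ)]
    (V : X → ℝ) (hVmeas : Measurable V) (hV0 : ∀ x, 0 ≤ V x)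
    (γ K : ℝ) (hγ : γ ∈ Set.Ioo (0:ℝ) 1) (hK : 0 < K)
    (hdrift : ∀ θ, Drift (P θ) V γ K)
    (R : ℝ) (hR : 2 * K / (1 - γ) < R)
    (μbar : Measure X) [IsProbabilityMeasure μbar]
    (αbar : ℝ) (hαbar : αbar ∈ Set.Ioo (0:ℝ) 1)
    (hminor : ∀ θ, ∀ x, V x ≤ R → ∀ A : Set X, MeasurableSet A →
      ENNReal.ofReal αbar * μbar A ≤ (P θ) x A)
    (α₀ : ℝ) (hα₀ : α₀ ∈ Set.Ioo 0 αbar)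
    (γ₀ : ℝ) (hγ₀ : γ₀ ∈ Set.Ioo (γ + 2 * K / R) 1)
    (β : ℝ) (hβ : β = α₀ / K)
    (α : ℝ) (hα : α = max (1 - (αbar - α₀)) ((2 + R * β * γ₀) / (2 + R * β))) :
    γ < α ∧ α < 1 ∧
      ∀ θ, ∀ φ : X → ℝ, Measurable φ → osc β V φ < ⊤ →
        osc β V (act (P θ) φ) ≤ ENNReal.ofReal α * osc β V φ :=
  oscillation_contraction_uniform_general P V hVmeas hV0 γ K hγ hK hdrift R hR μbar αbar hαbar
    hminor α₀ hα₀ γ₀ hγ₀ β hβ α hα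

end PoissonPaper
end
end

section
/- For every θ ∈ Θ there exists a unique probability measure μ*_θ on X such that ∫ V dμ*_θ < ∞ and P_θ μ*_θ = μ*_θ. -/
/-!
Nummelin splitting. The minorization on `C = {V ≤ R}` splits each kernel as
`P x = Q x + s x • μ̄` with `s = ᾱ 1_C`, and the drift makes the residual sub-Markov kernel `Q` a
strict contraction for the weight `w = 1 + εV`: off `C` this is the drift itself, on `C` the
removed mass `ᾱ` pays for the additive constant. Hence the potential `ν = ∑ₙ Qⁿ ∘ μ̄` has finite
`w`-integral and satisfies `ν = μ̄ + Q ∘ ν`; comparing total masses gives `∫ s dν = 1`, so `ν` is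
`P`-invariant. Conversely, an invariant `μ` with `∫ w dμ < ∞` satisfies
`μ = Qⁿ ∘ μ + (∫ s dμ) ∑_{k<n} Qᵏ ∘ μ̄` with `Qⁿ ∘ μ → 0`, so `μ` is a multiple of `ν`.
-/

open MeasureTheory ProbabilityTheory ENNReal

noncomputable section

namespace PoissonPaper

variable {X : Type*} [MeasurableSpace X]

open Filter Topology Finset

lemma exists_kernel_eq_add_indicator_smul {α β : Type*} [MeasurableSpace α] [MeasurableSpace β]
    (P : Kernel α β) (μ : Measure β) [IsFiniteMeasure μ]
    {C : Set α} (hC : MeasurableSet C) {a : ℝ≥0∞} (ha : a ≠ ⊤) (hle : ∀ x ∈ C, a • μ ≤ P x) :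
    ∃ Q : Kernel α β, ∀ x, P x = Q x + C.indicator (fun _ => a) x • μ := by
  have hs : Measurable (C.indicator fun _ => a) := measurable_const.indicator hC
  have hle' : ∀ x, C.indicator (fun _ => a) x • μ ≤ P x := fun x => by
    by_cases hx : x ∈ C
    · simpa [hx] using hle x hx
    · simp [hx, Measure.zero_le]
  have hfin : ∀ x, IsFiniteMeasure (C.indicator (fun _ => a) x • μ) := fun x =>
    μ.smul_finite (by by_cases hx : x ∈ C <;> simp [hx, ha])
  refine ⟨⟨fun x => P x - C.indicator (fun _ => a) x • μ,
    Measure.measurable_of_measurable_coe _ fun A hA => ?_⟩,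
    fun x => (Measure.sub_add_cancel_of_le (hle' x)).symm⟩
  simp_rw [Measure.sub_apply hA (hle' _), Measure.smul_apply, smul_eq_mul]
  exact (P.measurable_coe hA).sub (hs.mul_const _)

lemma measure_univ_le_lintegral {w : X → ℝ≥0∞} (hw1 : ∀ x, 1 ≤ w x) (μ : Measure X) :
    μ Set.univ ≤ ∫⁻ x, w x ∂μ :=
  lintegral_one.symm.trans_le (lintegral_mono hw1)

lemma exists_mul_lt_lintegral [Nonempty X] (P : Kernel X X) [IsMarkovKernel P]
    {w : X → ℝ≥0∞} (hw1 : ∀ x, 1 ≤ w x) (hPw : ∀ x, ∫⁻ y, w y ∂P x ≠ ⊤) {l : ℝ≥0∞} (hl : l < 1) :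
    ∃ x, l * w x < ∫⁻ y, w y ∂P x := by
  by_contra! h
  set m := ⨅ x, w x
  have hm : ∀ x, m ≤ ∫⁻ y, w y ∂P x := fun x => by
    simpa using lintegral_mono (μ := P x) fun y => iInf_le w y
  obtain ⟨x₀⟩ := ‹Nonempty X›
  have hm_top : m ≠ ⊤ := ne_top_of_le_ne_top (hPw x₀) (hm x₀)
  have hm0 : m ≠ 0 := (zero_lt_one.trans_le (le_iInf hw1)).ne'
  have hml : m ≤ l * m := by
    rw [ENNReal.mul_iInf fun h => absurd h hl.ne_top]
    exact le_iInf fun x => (hm x).trans (h x)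
  exact hml.not_gt (by simpa [mul_comm] using ENNReal.mul_lt_mul_right hm0 hm_top hl)

section Potential

def potential (Q : Kernel X X) (μ : Measure X) : Measure X :=
  Measure.sum fun n => kpow Q n ∘ₘ μ

lemma kpow_succ_comp (Q : Kernel X X) (n : ℕ) (μ : Measure X) :
    kpow Q (n + 1) ∘ₘ μ = Q ∘ₘ (kpow Q n ∘ₘ μ) := by
  rw [kpow, Measure.comp_assoc]

lemma comp_sum_range (Q : Kernel X X) (μ : ℕ → Measure X) (n : ℕ) :
    Q ∘ₘ ∑ k ∈ range n, μ k = ∑ k ∈ range n, Q ∘ₘ μ k := by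
  induction n with
  | zero => simp
  | succ n ih => rw [sum_range_succ, sum_range_succ, Measure.comp_add, ih]

lemma potential_eq_add_comp (Q : Kernel X X) (μ : Measure X) :
    potential Q μ = μ + Q ∘ₘ potential Q μ := by
  ext A hA
  rw [potential, Measure.bind_sum _ _ Q.aemeasurable, Measure.add_apply, Measure.sum_apply _ hA,
    Measure.sum_apply _ hA, tsum_eq_zero_add' ENNReal.summable]
  simp_rw [kpow_succ_comp]
  simp [kpow]

variable {Q : Kernel X X} {w : X → ℝ≥0∞} {l : ℝ≥0∞} (hw : Measurable w)
  (hQw : ∀ x, ∫⁻ y, w y ∂Q x ≤ l * w x)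
include hw hQw

lemma lintegral_comp_le (μ : Measure X) : ∫⁻ x, w x ∂(Q ∘ₘ μ) ≤ l * ∫⁻ x, w x ∂μ := by
  rw [Measure.lintegral_bind Q.aemeasurable hw.aemeasurable, ← lintegral_const_mul _ hw]
  exact lintegral_mono hQw

lemma lintegral_kpow_comp_le (μ : Measure X) (n : ℕ) :
    ∫⁻ x, w x ∂(kpow Q n ∘ₘ μ) ≤ l ^ n * ∫⁻ x, w x ∂μ := by
  induction n with
  | zero => simp [kpow]
  | succ n ih =>
    rw [kpow_succ_comp, pow_succ', mul_assoc]
    exact (lintegral_comp_le hw hQw _).trans (by gcongr)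

lemma lintegral_potential_le (μ : Measure X) :
    ∫⁻ x, w x ∂(potential Q μ) ≤ (1 - l)⁻¹ * ∫⁻ x, w x ∂μ := by
  rw [potential, lintegral_sum_measure, ← ENNReal.tsum_geometric, ← ENNReal.tsum_mul_right]
  exact ENNReal.tsum_le_tsum (lintegral_kpow_comp_le hw hQw μ)

end Potential

section Regeneration

variable {P Q : Kernel X X} {μ₀ : Measure X} {s : X → ℝ≥0∞}
  (hPQ : ∀ x, P x = Q x + s x • μ₀)
include hPQ

lemma lintegral_eq_lintegral_add_mul (f : X → ℝ≥0∞) (x : X) :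
    ∫⁻ y, f y ∂P x = ∫⁻ y, f y ∂Q x + s x * ∫⁻ y, f y ∂μ₀ := by
  rw [hPQ x, lintegral_add_measure, lintegral_smul_measure, smul_eq_mul]

lemma comp_eq_comp_add_smul (hs : Measurable s) (μ : Measure X) :
    P ∘ₘ μ = Q ∘ₘ μ + (∫⁻ x, s x ∂μ) • μ₀ := by
  ext A hA
  rw [Measure.add_apply, Measure.smul_apply, smul_eq_mul, Measure.bind_apply hA P.aemeasurable,
    Measure.bind_apply hA Q.aemeasurable, ← lintegral_mul_const _ hs,
    ← lintegral_add_left (Q.measurable_coe hA)]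
  simp [hPQ]

lemma eq_kpow_comp_add_smul_sum (hs : Measurable s) {μ : Measure X} (hinv : P ∘ₘ μ = μ) (n : ℕ) :
    μ = kpow Q n ∘ₘ μ + (∫⁻ x, s x ∂μ) • ∑ k ∈ range n, kpow Q k ∘ₘ μ₀ := by
  induction n with
  | zero => simp [kpow]
  | succ n ih =>
    calc μ = Q ∘ₘ μ + (∫⁻ x, s x ∂μ) • μ₀ := by rw [← comp_eq_comp_add_smul hPQ hs, hinv]
      _ = Q ∘ₘ (kpow Q n ∘ₘ μ + (∫⁻ x, s x ∂μ) • ∑ k ∈ range n, kpow Q k ∘ₘ μ₀)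
          + (∫⁻ x, s x ∂μ) • μ₀ := by rw [← ih]
      _ = _ := by
        rw [Measure.comp_add, Measure.comp_smul, comp_sum_range, sum_range_succ', add_assoc,
          ← smul_add]
        simp_rw [kpow_succ_comp]
        simp [kpow]

variable [IsMarkovKernel P] [IsProbabilityMeasure μ₀]

lemma comp_univ_add_lintegral (hs : Measurable s) (μ : Measure X) :
    (Q ∘ₘ μ) Set.univ + ∫⁻ x, s x ∂μ = μ Set.univ := by
  simpa using (congrArg (· Set.univ) (comp_eq_comp_add_smul hPQ hs μ)).symm

lemma comp_potential (hs : Measurable s) (hν : potential Q μ₀ Set.univ ≠ ⊤) :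
    P ∘ₘ potential Q μ₀ = potential Q μ₀ := by
  set ν := potential Q μ₀
  have hshift : ν = μ₀ + Q ∘ₘ ν := potential_eq_add_comp Q μ₀
  have hν_univ : ν Set.univ = 1 + (Q ∘ₘ ν) Set.univ := by
    conv_lhs => rw [hshift]
    simp
  have hQν : (Q ∘ₘ ν) Set.univ ≠ ⊤ := ne_top_of_le_ne_top hν (hν_univ ▸ le_add_self)
  have hs1 : ∫⁻ x, s x ∂ν = 1 := by
    have h := comp_univ_add_lintegral hPQ hs ν
    rw [hν_univ, add_comm 1] at h
    exact (ENNReal.add_right_inj hQν).1 h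
  rw [comp_eq_comp_add_smul hPQ hs, hs1, one_smul, add_comm, ← hshift]

variable {w : X → ℝ≥0∞} {l : ℝ≥0∞} (hw1 : ∀ x, 1 ≤ w x) (hl : l < 1)
  (hQw : ∀ x, ∫⁻ y, w y ∂Q x ≤ l * w x)
include hw1 hl hQw

lemma lintegral_ne_top_of_splitting (hPw : ∀ x, ∫⁻ y, w y ∂P x ≠ ⊤) : ∫⁻ x, w x ∂μ₀ ≠ ⊤ := by
  -- `P` itself does not contract `w`, so the regeneration rate `s` is positive somewhere
  have := nonempty_of_isProbabilityMeasure μ₀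
  obtain ⟨x, hx⟩ := exists_mul_lt_lintegral P hw1 hPw hl
  have hPx := hPw x
  rw [lintegral_eq_lintegral_add_mul hPQ] at hx hPx
  have hsx : s x ≠ 0 := fun h => by
    rw [h, zero_mul, add_zero] at hx
    exact (hQw x).not_gt hx
  intro htop
  exact hPx (by rw [htop, ENNReal.mul_top hsx, add_top])

lemma eq_smul_potential (hs : Measurable s) (hw : Measurable w) {μ : Measure X}
    (hinv : P ∘ₘ μ = μ) (hμw : ∫⁻ x, w x ∂μ ≠ ⊤) :
    μ = (∫⁻ x, s x ∂μ) • potential Q μ₀ := by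
  set c := ∫⁻ x, s x ∂μ
  have hμ_univ : μ Set.univ ≠ ⊤ := ne_top_of_le_ne_top hμw (measure_univ_le_lintegral hw1 μ)
  have hc : c ≠ ⊤ := ne_top_of_le_ne_top hμ_univ (comp_univ_add_lintegral hPQ hs μ ▸ le_add_self)
  ext A hA
  have hsplit : ∀ n, (kpow Q n ∘ₘ μ) A + c * ∑ k ∈ range n, (kpow Q k ∘ₘ μ₀) A = μ A := fun n => by
    conv_rhs => rw [eq_kpow_comp_add_smul_sum hPQ hs hinv n]
    simp [c]
  have hdecay : Tendsto (fun n => (kpow Q n ∘ₘ μ) A) atTop (𝓝 0) := by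
    have hbound : Tendsto (fun n => l ^ n * ∫⁻ x, w x ∂μ) atTop (𝓝 0) := by
      simpa using ENNReal.Tendsto.mul_const (ENNReal.tendsto_pow_atTop_nhds_zero_of_lt_one hl)
        (Or.inr hμw)
    refine tendsto_of_tendsto_of_tendsto_of_le_of_le tendsto_const_nhds hbound (fun _ => bot_le)
      fun n => ?_
    exact (measure_mono (Set.subset_univ A)).trans
      ((measure_univ_le_lintegral hw1 _).trans (lintegral_kpow_comp_le hw hQw μ n))
  have hlim := hdecay.add (ENNReal.Tendsto.const_mul
    (ENNReal.tendsto_nat_tsum fun k => (kpow Q k ∘ₘ μ₀) A) (Or.inr hc))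
  rw [zero_add] at hlim
  rw [Measure.smul_apply, smul_eq_mul, potential, Measure.sum_apply _ hA]
  exact tendsto_nhds_unique (tendsto_const_nhds.congr fun n => (hsplit n).symm) hlim

theorem existsUnique_invariant_of_splitting (hs : Measurable s) (hw : Measurable w)
    (hPw : ∀ x, ∫⁻ y, w y ∂P x ≠ ⊤) :
    ∃! μ : Measure X, IsProbabilityMeasure μ ∧ ∫⁻ x, w x ∂μ ≠ ⊤ ∧ P ∘ₘ μ = μ := by
  set ν := potential Q μ₀
  have hshift : ν = μ₀ + Q ∘ₘ ν := potential_eq_add_comp Q μ₀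
  have hνw : ∫⁻ x, w x ∂ν ≠ ⊤ := ne_top_of_le_ne_top
    (mul_ne_top (inv_ne_top.2 (tsub_pos_of_lt hl).ne')
      (lintegral_ne_top_of_splitting hPQ hw1 hl hQw hPw))
    (lintegral_potential_le hw hQw μ₀)
  have hν_top : ν Set.univ ≠ ⊤ := ne_top_of_le_ne_top hνw (measure_univ_le_lintegral hw1 ν)
  have hν0 : ν Set.univ ≠ 0 := by
    rw [hshift, Measure.add_apply, measure_univ]
    exact (one_pos.trans_le le_self_add).ne'
  refine ⟨(ν Set.univ)⁻¹ • ν, ⟨⟨?_⟩, ?_, ?_⟩, ?_⟩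
  · rw [Measure.smul_apply, smul_eq_mul, ENNReal.inv_mul_cancel hν0 hν_top]
  · rw [lintegral_smul_measure]
    exact mul_ne_top (inv_ne_top.2 hν0) hνw
  · rw [Measure.comp_smul, comp_potential hPQ hs hν_top]
  · rintro μ ⟨hμ, hμw, hinv⟩
    have hμν := eq_smul_potential hPQ hw1 hl hQw hs hw hinv hμw
    have hmass : (∫⁻ x, s x ∂μ) * ν Set.univ = 1 := by
      rw [← smul_eq_mul, ← Measure.smul_apply, ← hμν, measure_univ]
    rw [hμν, ENNReal.eq_inv_of_mul_eq_one_left hmass]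

end Regeneration

section Drift

lemma ofReal_one_add_mul {ε v : ℝ} (hε : 0 ≤ ε) (hv : 0 ≤ v) :
    ENNReal.ofReal (1 + ε * v) = 1 + ENNReal.ofReal ε * ENNReal.ofReal v := by
  rw [ENNReal.ofReal_add zero_le_one (mul_nonneg hε hv), ENNReal.ofReal_one, ENNReal.ofReal_mul hε]

lemma one_le_ofReal_one_add_mul {ε v : ℝ} (hε : 0 ≤ ε) (hv : 0 ≤ v) :
    1 ≤ ENNReal.ofReal (1 + ε * v) :=
  ENNReal.one_le_ofReal.2 (le_add_of_nonneg_right (mul_nonneg hε hv))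

variable {V : X → ℝ} (hV : Measurable V) (hV0 : ∀ x, 0 ≤ V x) {ε : ℝ}
include hV hV0

lemma lintegral_ofReal_one_add_mul (hε : 0 ≤ ε) (μ : Measure X) :
    ∫⁻ x, ENNReal.ofReal (1 + ε * V x) ∂μ
      = μ Set.univ + ENNReal.ofReal ε * ∫⁻ x, ENNReal.ofReal (V x) ∂μ := by
  simp_rw [ofReal_one_add_mul hε (hV0 _)]
  rw [lintegral_add_left measurable_const, lintegral_const_mul _ hV.ennreal_ofReal,
    lintegral_const, one_mul]

lemma integrable_iff_lintegral_ofReal_one_add_mul_ne_top (hε : 0 < ε) (μ : Measure X)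
    [IsFiniteMeasure μ] :
    Integrable V μ ↔ ∫⁻ x, ENNReal.ofReal (1 + ε * V x) ∂μ ≠ ⊤ := by
  rw [lintegral_ofReal_one_add_mul hV hV0 hε.le,
    ← lintegral_ofReal_ne_top_iff_integrable hV.aestronglyMeasurable (ae_of_all _ hV0)]
  simp [measure_ne_top, ENNReal.mul_eq_top, hε.not_ge]

lemma lintegral_ofReal_one_add_mul_le_of_drift (hε : 0 ≤ ε) {P : Kernel X X} [IsMarkovKernel P]
    {γ K : ℝ} (hdrift : Drift P V γ K) (hγ : 0 ≤ γ) (hK : 0 ≤ K) (x : X) :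
    ∫⁻ y, ENNReal.ofReal (1 + ε * V y) ∂P x ≤ ENNReal.ofReal (1 + ε * (γ * V x + K)) := by
  rw [lintegral_ofReal_one_add_mul hV hV0 hε, measure_univ,
    ofReal_one_add_mul hε (add_nonneg (mul_nonneg hγ (hV0 x)) hK)]
  gcongr
  exact hdrift x

end Drift

lemma exists_drift_constants {γ K R α : ℝ} (hγ : 0 ≤ γ) (hK : 0 ≤ K) (hR : 0 < R)
    (hKR : K < (1 - γ) * R) (hα : 0 < α) :
    ∃ ε l : ℝ, 0 < ε ∧ 0 ≤ l ∧ l < 1 ∧ (∀ v, v ≤ R → 1 + ε * (γ * v + K) ≤ l + α) ∧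
      ∀ v, R < v → 1 + ε * (γ * v + K) ≤ l * (1 + ε * v) := by
  -- with `ε = α / R`, the bound on `{v ≤ R}` holds with slack `α (1 - l)`
  set ε := α / R
  have hεR : ε * R = α := div_mul_cancel₀ α hR.ne'
  have hε : 0 < ε := div_pos hα hR
  have hden : 0 < 1 + ε * R := by positivity
  set l := (1 + ε * (γ * R + K)) / (1 + ε * R)
  have hl : l * (1 + ε * R) = 1 + ε * (γ * R + K) := div_mul_cancel₀ _ hden.ne'
  have hl1 : l < 1 := by rw [div_lt_one hden]; nlinarith
  have hγl : γ ≤ l := by rw [le_div_iff₀ hden]; nlinarith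
  refine ⟨ε, l, hε, by positivity, hl1, fun v hv => ?_, fun v hv => ?_⟩
  · nlinarith [mul_le_mul_of_nonneg_left hv (mul_nonneg hε.le hγ),
      mul_le_mul_of_nonneg_right hl1.le hα.le]
  · nlinarith [mul_le_mul_of_nonneg_right hγl (mul_nonneg hε.le (sub_nonneg.2 hv.le))]

lemma lintegral_le_mul_of_splitting {P Q : Kernel X X} {μ₀ : Measure X} [IsProbabilityMeasure μ₀]
    {C : Set X} {a : ℝ≥0∞} (ha : a ≠ ⊤) (hPQ : ∀ x, P x = Q x + C.indicator (fun _ => a) x • μ₀)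
    {w : X → ℝ≥0∞} (hw1 : ∀ x, 1 ≤ w x) {l : ℝ≥0∞} (hC : ∀ x ∈ C, ∫⁻ y, w y ∂P x ≤ l + a)
    (hCc : ∀ x ∉ C, ∫⁻ y, w y ∂P x ≤ l * w x) (x : X) :
    ∫⁻ y, w y ∂Q x ≤ l * w x := by
  by_cases hx : x ∈ C
  · have h := hC x hx
    rw [lintegral_eq_lintegral_add_mul hPQ, Set.indicator_of_mem hx] at h
    have hμ₀ : a ≤ a * ∫⁻ y, w y ∂μ₀ :=
      le_mul_of_one_le_right' (measure_univ.symm.trans_le (measure_univ_le_lintegral hw1 μ₀))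
    have h' : ∫⁻ y, w y ∂Q x + a ≤ l + a := le_trans (by gcongr) h
    exact ((ENNReal.add_le_add_iff_right ha).1 h').trans (le_mul_of_one_le_right' (hw1 x))
  · simpa [lintegral_eq_lintegral_add_mul hPQ, hx] using hCc x hx

lemma exists_residual_lintegral_le_mul {P Q : Kernel X X} [IsMarkovKernel P] {μ₀ : Measure X}
    [IsProbabilityMeasure μ₀] {V : X → ℝ} (hV : Measurable V) (hV0 : ∀ x, 0 ≤ V x)
    {γ K R α : ℝ} (hdrift : Drift P V γ K) (hγ : 0 ≤ γ) (hK : 0 ≤ K) (hR : 0 < R)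
    (hKR : K < (1 - γ) * R) (hα : 0 < α)
    (hPQ : ∀ x, P x = Q x + {x | V x ≤ R}.indicator (fun _ => ENNReal.ofReal α) x • μ₀) :
    ∃ ε : ℝ, 0 < ε ∧ ∃ l : ℝ≥0∞, l < 1 ∧
      ∀ x, ∫⁻ y, ENNReal.ofReal (1 + ε * V y) ∂Q x ≤ l * ENNReal.ofReal (1 + ε * V x) := by
  obtain ⟨ε, l, hε, hl0, hl1, hlC, hlCc⟩ := exists_drift_constants hγ hK hR hKR hα
  have hPw := lintegral_ofReal_one_add_mul_le_of_drift hV hV0 hε.le hdrift hγ hK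
  refine ⟨ε, hε, ENNReal.ofReal l, ENNReal.ofReal_lt_one.2 hl1,
    lintegral_le_mul_of_splitting ENNReal.ofReal_ne_top hPQ
      (fun x => one_le_ofReal_one_add_mul hε.le (hV0 x)) (fun x hx => ?_) fun x hx => ?_⟩
  · rw [← ENNReal.ofReal_add hl0 hα.le]
    exact (hPw x).trans (ENNReal.ofReal_le_ofReal (hlC _ hx))
  · rw [← ENNReal.ofReal_mul hl0]
    exact (hPw x).trans (ENNReal.ofReal_le_ofReal (hlCc _ (not_le.1 hx)))

theorem exists_unique_invariant_measure_general
    {X : Type*} [MeasurableSpace X] {k : ℕ} {Θ : Set (EuclideanSpace ℝ (Fin k))}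
    (P : Θ → Kernel X X) [∀ θ, IsMarkovKernel (P θ)]
    (V : X → ℝ) (hVmeas : Measurable V) (hV0 : ∀ x, 0 ≤ V x)
    (γ K : ℝ) (hγ : γ ∈ Set.Ioo (0:ℝ) 1) (hK : 0 < K)
    (hdrift : ∀ θ, Drift (P θ) V γ K)
    (R : ℝ) (hR : 2 * K / (1 - γ) < R)
    (μbar : Measure X) [IsProbabilityMeasure μbar]
    (αbar : ℝ) (hαbar : αbar ∈ Set.Ioo (0:ℝ) 1)
    (hminor : ∀ θ, ∀ x, V x ≤ R → ∀ A : Set X, MeasurableSet A →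
      ENNReal.ofReal αbar * μbar A ≤ (P θ) x A) :
    ∀ θ, ∃! μ : Measure X,
      IsProbabilityMeasure μ ∧ Integrable V μ ∧ μ.bind (P θ) = μ := by
  intro θ
  have h1γ : 0 < 1 - γ := sub_pos.2 hγ.2
  have hR0 : 0 < R := (div_pos (by linarith) h1γ).trans hR
  have hKR : K < (1 - γ) * R := by rw [div_lt_iff₀ h1γ] at hR; linarith
  have hC : MeasurableSet {x | V x ≤ R} := measurableSet_le hVmeas measurable_const
  obtain ⟨Q, hPQ⟩ := exists_kernel_eq_add_indicator_smul (P θ) μbar hC ENNReal.ofReal_ne_top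
    fun x hx => Measure.le_iff.2 fun A hA => hminor θ x hx A hA
  obtain ⟨ε, hε, l, hl, hQw⟩ := exists_residual_lintegral_le_mul hVmeas hV0 (hdrift θ) hγ.1.le
    hK.le hR0 hKR hαbar.1 hPQ
  have hPw x := lintegral_ofReal_one_add_mul_le_of_drift hVmeas hV0 hε.le (hdrift θ) hγ.1.le hK.le x
  refine (existsUnique_congr fun μ => and_congr_right fun hμ => ?_).1
    (existsUnique_invariant_of_splitting hPQ (fun x => one_le_ofReal_one_add_mul hε.le (hV0 x)) hl
      hQw (measurable_const.indicator hC)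
      (measurable_const.add (measurable_const.mul hVmeas)).ennreal_ofReal
      fun x => ne_top_of_le_ne_top ENNReal.ofReal_ne_top (hPw x))
  have := hμ
  rw [integrable_iff_lintegral_ofReal_one_add_mul_ne_top hVmeas hV0 hε]

/-- Existence and uniqueness of the invariant probability measure with
finite `V`-integral, for each parameter. -/
theorem exists_unique_invariant_measure
    {X : Type*} [MeasurableSpace X] {k : ℕ} {Θ : Set (EuclideanSpace ℝ (Fin k))}
    (hΘ : Θ.Nonempty) (P : Θ → Kernel X X) [∀ θ, IsMarkovKernel (P θ)]
    (V : X → ℝ) (hVmeas : Measurable V) (hV0 : ∀ x, 0 ≤ V x)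
    (γ K : ℝ) (hγ : γ ∈ Set.Ioo (0:ℝ) 1) (hK : 0 < K)
    (hdrift : ∀ θ, Drift (P θ) V γ K)
    (R : ℝ) (hR : 2 * K / (1 - γ) < R)
    (μbar : Measure X) [IsProbabilityMeasure μbar]
    (αbar : ℝ) (hαbar : αbar ∈ Set.Ioo (0:ℝ) 1)
    (hminor : ∀ θ, ∀ x, V x ≤ R → ∀ A : Set X, MeasurableSet A →
      ENNReal.ofReal αbar * μbar A ≤ (P θ) x A) :
    ∀ θ, ∃! μ : Measure X,
      IsProbabilityMeasure μ ∧ Integrable V μ ∧ μ.bind (P θ) = μ :=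
  exists_unique_invariant_measure_general P V hVmeas hV0 γ K hγ hK hdrift R hR μbar αbar hαbar
    hminor

end PoissonPaper
end
end

section
/- Let f : X → ℝ be measurable with |||f|||_β < ∞ and set h = ∫ f dμ*. Then: (i) for every x ∈ X the series u(x) = Σ_{n≥0} ((P^{*n} f)(x) − h) converges absolutely; (ii) u solves the Poisson equation u(x) − (P*u)(x) = f(x) − h for all x; (iii) ∫ u dμ* = 0; (iv) |u(x)| ≤ |||f|||_β · (1/(1 − α)) (2 + βV(x) + βK/(1 − γ)) for all x, so that ‖u‖_β ≤ |||f|||_β · (1/(1 − α))(2 + βK/(1 − γ)); and (v) any two solutions of the Poisson equation with finite seminorm |||·|||_β differ by a constant. -/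
/-!
Since `P*` contracts `|||·|||_β` by `α`, the iterates satisfy `|||P^{*n} f|||_β ≤ αⁿ |||f|||_β`.
By invariance `∫ P^{*n} f dμ* = h`, so averaging
`|φ x - φ y| ≤ |||φ|||_β (2 + βV x + βV y)` over `μ*(dy)` gives the geometric domination
`|P^{*n} f x - h| ≤ αⁿ |||f|||_β (2 + βV x + β ∫ V dμ*)`, while drift and invariance give
`∫ V dμ* ≤ K / (1 - γ)`. The dominating function is integrable against `P(x, ·)` and `μ*`, so sums
and integrals may be exchanged: `P*u` is the shifted series, which gives the Poisson equation, and
every term of `∫ u dμ*` vanishes. The difference of two solutions is fixed by `P*` and has finite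
oscillation, so its oscillation is at most `α` times itself, hence zero.
-/

open MeasureTheory ProbabilityTheory ENNReal

noncomputable section

namespace PoissonPaper

variable {X : Type*} [MeasurableSpace X]

section Oscillation

variable {β : ℝ} {V : X → ℝ}

omit [MeasurableSpace X]

lemma dBeta_nonneg (hβ : 0 ≤ β) (hV0 : ∀ x, 0 ≤ V x) (x y : X) : 0 ≤ dBeta β V x y := by
  have := mul_nonneg hβ (hV0 x)
  have := mul_nonneg hβ (hV0 y)
  unfold dBeta
  split_ifs <;> linarith

lemma dBeta_le (hβ : 0 ≤ β) (hV0 : ∀ x, 0 ≤ V x) (x y : X) :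
    dBeta β V x y ≤ 2 + β * V x + β * V y := by
  have := mul_nonneg hβ (hV0 x)
  have := mul_nonneg hβ (hV0 y)
  unfold dBeta
  split_ifs <;> linarith

lemma abs_sub_le_of_osc_le (hβ : 0 ≤ β) (hV0 : ∀ x, 0 ≤ V x) {φ : X → ℝ} {L : ℝ} (hL : 0 ≤ L)
    (h : osc β V φ ≤ ENNReal.ofReal L) (x y : X) :
    |φ x - φ y| ≤ L * (2 + β * V x + β * V y) := by
  refine le_trans ?_ (mul_le_mul_of_nonneg_left (dBeta_le hβ hV0 x y) hL)
  rcases eq_or_ne x y with rfl | hxy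
  · simp [dBeta]
  have hd : 0 < dBeta β V x y := by
    have := mul_nonneg hβ (hV0 x)
    have := mul_nonneg hβ (hV0 y)
    rw [dBeta, if_neg hxy]
    linarith
  have hq : ENNReal.ofReal (|φ x - φ y| / dBeta β V x y) ≤ ENNReal.ofReal L :=
    (le_iSup₂ (f := fun x y => ENNReal.ofReal (|φ x - φ y| / dBeta β V x y)) x y).trans h
  exact (div_le_iff₀ hd).1 ((ENNReal.ofReal_le_ofReal_iff hL).1 hq)

lemma eq_of_osc_eq_zero (hβ : 0 ≤ β) (hV0 : ∀ x, 0 ≤ V x) {φ : X → ℝ} (h : osc β V φ = 0)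
    (x y : X) : φ x = φ y := by
  have := abs_sub_le_of_osc_le (φ := φ) hβ hV0 le_rfl (by simp [h]) x y
  rwa [zero_mul, abs_nonpos_iff, sub_eq_zero] at this

lemma osc_sub_le (hβ : 0 ≤ β) (hV0 : ∀ x, 0 ≤ V x) (φ ψ : X → ℝ) :
    osc β V (fun x => φ x - ψ x) ≤ osc β V φ + osc β V ψ := by
  refine iSup₂_le fun x y => ?_
  have hd := dBeta_nonneg hβ hV0 x y
  calc ENNReal.ofReal (|φ x - ψ x - (φ y - ψ y)| / dBeta β V x y)
      ≤ ENNReal.ofReal (|φ x - φ y| / dBeta β V x y + |ψ x - ψ y| / dBeta β V x y) := by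
        rw [← add_div]
        gcongr
        rw [sub_sub_sub_comm]
        exact abs_sub _ _
    _ ≤ ENNReal.ofReal (|φ x - φ y| / dBeta β V x y) +
          ENNReal.ofReal (|ψ x - ψ y| / dBeta β V x y) := ENNReal.ofReal_add_le
    _ ≤ osc β V φ + osc β V ψ := by
        gcongr
        · exact le_iSup₂ (f := fun x y => ENNReal.ofReal (|φ x - φ y| / dBeta β V x y)) x y
        · exact le_iSup₂ (f := fun x y => ENNReal.ofReal (|ψ x - ψ y| / dBeta β V x y)) x y

lemma wnorm_le_ofReal_mul (hβ : 0 ≤ β) (hV0 : ∀ x, 0 ≤ V x) {φ : X → ℝ} {A c : ℝ} (hA : 0 ≤ A)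
    (hc : 1 ≤ c) (h : ∀ x, |φ x| ≤ A * (c + β * V x)) : wnorm β V φ ≤ ENNReal.ofReal (A * c) := by
  refine iSup_le fun x => ENNReal.ofReal_le_ofReal ?_
  have hVx := mul_nonneg hβ (hV0 x)
  rw [div_le_iff₀ (by linarith)]
  nlinarith [h x, mul_nonneg (mul_nonneg hA hVx) (sub_nonneg.2 hc)]

end Oscillation

section Integrals

variable {β : ℝ} {V : X → ℝ}

lemma integrable_of_osc_ne_top (hβ : 0 ≤ β) (hV0 : ∀ x, 0 ≤ V x) {ν : Measure X}
    [IsFiniteMeasure ν] (hV : Integrable V ν) {φ : X → ℝ} (hφ : Measurable φ)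
    (h : osc β V φ ≠ ⊤) : Integrable φ ν := by
  rcases isEmpty_or_nonempty X with hX | ⟨⟨x₀⟩⟩
  · exact .of_isEmpty
  obtain ⟨L, hL0, hL⟩ : ∃ L, 0 ≤ L ∧ osc β V φ ≤ ENNReal.ofReal L :=
    ⟨_, ENNReal.toReal_nonneg, (ENNReal.ofReal_toReal h).ge⟩
  refine ((integrable_const (|φ x₀| + L * (2 + β * V x₀))).add (hV.const_mul (L * β))).mono'
    hφ.aestronglyMeasurable (ae_of_all _ fun y => ?_)
  have := abs_sub_le_of_osc_le hβ hV0 hL0 hL y x₀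
  have := abs_sub_abs_le_abs_sub (φ y) (φ x₀)
  rw [Real.norm_eq_abs, Pi.add_apply]
  linarith

lemma abs_sub_integral_le_of_osc_le (hβ : 0 ≤ β) (hV0 : ∀ x, 0 ≤ V x) {ν : Measure X}
    [IsProbabilityMeasure ν] (hV : Integrable V ν) {φ : X → ℝ} (hφ : Measurable φ) {L : ℝ}
    (hL : 0 ≤ L) (h : osc β V φ ≤ ENNReal.ofReal L) (x : X) :
    |φ x - ∫ y, φ y ∂ν| ≤ L * (2 + β * V x + β * ∫ y, V y ∂ν) := by
  have hφν : Integrable φ ν :=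
    integrable_of_osc_ne_top hβ hV0 hV hφ (ne_top_of_le_ne_top ENNReal.ofReal_ne_top h)
  have hbound : Integrable (fun y => L * (2 + β * V x) + L * β * V y) ν :=
    (integrable_const _).add (hV.const_mul _)
  calc |φ x - ∫ y, φ y ∂ν| = ‖∫ y, (φ x - φ y) ∂ν‖ := by
        rw [integral_sub (integrable_const _) hφν, integral_const, probReal_univ, one_smul,
          Real.norm_eq_abs]
    _ ≤ ∫ y, (L * (2 + β * V x) + L * β * V y) ∂ν :=
        norm_integral_le_of_norm_le hbound (ae_of_all _ fun y => by
          have := abs_sub_le_of_osc_le hβ hV0 hL h x y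
          rw [Real.norm_eq_abs]
          linarith)
    _ = L * (2 + β * V x + β * ∫ y, V y ∂ν) := by
        rw [integral_add (integrable_const _) (hV.const_mul _), integral_const, probReal_univ,
          one_smul, integral_const_mul]
        ring

variable {P : Kernel X X} {γ K : ℝ}

lemma integrable_of_drift (hV : Measurable V) (hV0 : ∀ x, 0 ≤ V x) (hdrift : Drift P V γ K)
    (x : X) : Integrable V (P x) :=
  ⟨hV.aestronglyMeasurable, (hasFiniteIntegral_iff_ofReal (ae_of_all _ hV0)).2
    ((hdrift x).trans_lt ENNReal.ofReal_lt_top)⟩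

lemma integral_le_of_drift (hV : Measurable V) (hV0 : ∀ x, 0 ≤ V x) (hγ : 0 ≤ γ) (hK : 0 ≤ K)
    (hdrift : Drift P V γ K) (x : X) : ∫ y, V y ∂(P x) ≤ γ * V x + K := by
  rw [integral_eq_lintegral_of_nonneg_ae (ae_of_all _ hV0) hV.aestronglyMeasurable]
  exact ENNReal.toReal_le_of_le_ofReal (by have := mul_nonneg hγ (hV0 x); linarith) (hdrift x)

lemma integral_act_of_bind_eq [IsSFiniteKernel P] {μ : Measure X} [IsFiniteMeasure μ]
    (hinv : μ.bind P = μ) {φ : X → ℝ} (hφ : Integrable φ μ) :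
    ∫ x, act P φ x ∂μ = ∫ x, φ x ∂μ := by
  -- Fubini for `μ.bind P` is stated for compositions of kernels: view `μ` as a constant kernel.
  have hcomp : (P ∘ₖ Kernel.const Unit μ) () = μ := by
    rw [← Measure.comp_eq_comp_const_apply, hinv]
  rw [← hcomp] at hφ
  calc ∫ x, act P φ x ∂μ = ∫ x, ∫ y, φ y ∂P x ∂(Kernel.const Unit μ) () := by simp [act]
    _ = ∫ x, φ x ∂μ := by rw [← Kernel.integral_comp hφ, hcomp]

lemma integral_le_div_of_drift (hV : Measurable V) (hV0 : ∀ x, 0 ≤ V x) (hγ : γ ∈ Set.Ico 0 1)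
    (hK : 0 ≤ K) (hdrift : Drift P V γ K) [IsSFiniteKernel P] {μ : Measure X}
    [IsProbabilityMeasure μ] (hμV : Integrable V μ) (hinv : μ.bind P = μ) :
    ∫ x, V x ∂μ ≤ K / (1 - γ) := by
  have hmean : ∫ x, V x ∂μ ≤ γ * ∫ x, V x ∂μ + K :=
    calc ∫ x, V x ∂μ = ∫ x, act P V x ∂μ := (integral_act_of_bind_eq hinv hμV).symm
      _ ≤ ∫ x, (γ * V x + K) ∂μ :=
          integral_mono_of_nonneg (ae_of_all _ fun x => integral_nonneg hV0)
            ((hμV.const_mul γ).add (integrable_const K))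
            (ae_of_all _ (integral_le_of_drift hV hV0 hγ.1 hK hdrift))
      _ = γ * ∫ x, V x ∂μ + K := by
          rw [integral_add (hμV.const_mul γ) (integrable_const K), integral_const_mul,
            integral_const, probReal_univ, one_smul]
  rw [le_div_iff₀ (by linarith [hγ.2])]
  linarith

end Integrals

section Iterates

variable {P : Kernel X X} {α β : ℝ} {V : X → ℝ}

lemma measurable_act [IsSFiniteKernel P] {φ : X → ℝ} (hφ : Measurable φ) :
    Measurable (act P φ) :=
  (hφ.stronglyMeasurable.integral_kernel (κ := P)).measurable

lemma measurable_iterate_act [IsSFiniteKernel P] {φ : X → ℝ} (hφ : Measurable φ) (n : ℕ) :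
    Measurable ((act P)^[n] φ) := by
  induction n with
  | zero => exact hφ
  | succ n ih => rw [Function.iterate_succ_apply']; exact measurable_act ih

lemma osc_iterate_act_le [IsSFiniteKernel P] (hα : 0 ≤ α)
    (hosc : ∀ φ : X → ℝ, Measurable φ → osc β V φ < ⊤ →
      osc β V (act P φ) ≤ ENNReal.ofReal α * osc β V φ)
    {φ : X → ℝ} (hφ : Measurable φ) (hφosc : osc β V φ ≠ ⊤) (n : ℕ) :
    osc β V ((act P)^[n] φ) ≤ ENNReal.ofReal (α ^ n * (osc β V φ).toReal) := by
  induction n with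
  | zero => simp [ENNReal.ofReal_toReal hφosc]
  | succ n ih =>
    rw [Function.iterate_succ_apply']
    calc osc β V (act P ((act P)^[n] φ)) ≤ ENNReal.ofReal α * osc β V ((act P)^[n] φ) :=
          hosc _ (measurable_iterate_act hφ n) (ih.trans_lt ENNReal.ofReal_lt_top)
      _ ≤ ENNReal.ofReal α * ENNReal.ofReal (α ^ n * (osc β V φ).toReal) := by gcongr
      _ = ENNReal.ofReal (α ^ (n + 1) * (osc β V φ).toReal) := by
          rw [← ENNReal.ofReal_mul hα, pow_succ', mul_assoc]

lemma integrable_iterate_act [IsSFiniteKernel P] (hβ : 0 ≤ β) (hV0 : ∀ x, 0 ≤ V x)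
    (hα : 0 ≤ α)
    (hosc : ∀ φ : X → ℝ, Measurable φ → osc β V φ < ⊤ →
      osc β V (act P φ) ≤ ENNReal.ofReal α * osc β V φ)
    {ν : Measure X} [IsFiniteMeasure ν] (hV : Integrable V ν) {φ : X → ℝ} (hφ : Measurable φ)
    (hφosc : osc β V φ ≠ ⊤) (n : ℕ) : Integrable ((act P)^[n] φ) ν :=
  integrable_of_osc_ne_top hβ hV0 hV (measurable_iterate_act hφ n)
    (ne_top_of_le_ne_top ENNReal.ofReal_ne_top (osc_iterate_act_le hα hosc hφ hφosc n))

lemma integral_iterate_act_of_bind_eq [IsSFiniteKernel P] {μ : Measure X} [IsFiniteMeasure μ]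
    (hinv : μ.bind P = μ) {φ : X → ℝ} (hint : ∀ n, Integrable ((act P)^[n] φ) μ) (n : ℕ) :
    ∫ x, (act P)^[n] φ x ∂μ = ∫ x, φ x ∂μ := by
  induction n with
  | zero => rfl
  | succ n ih => rw [Function.iterate_succ_apply', integral_act_of_bind_eq hinv (hint n), ih]

theorem abs_iterate_act_sub_integral_le [IsSFiniteKernel P] (hβ : 0 ≤ β)
    (hV0 : ∀ x, 0 ≤ V x) (hα : 0 ≤ α)
    (hosc : ∀ φ : X → ℝ, Measurable φ → osc β V φ < ⊤ →
      osc β V (act P φ) ≤ ENNReal.ofReal α * osc β V φ)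
    {μ : Measure X} [IsProbabilityMeasure μ] (hμV : Integrable V μ) (hinv : μ.bind P = μ)
    {f : X → ℝ} (hf : Measurable f) (hfosc : osc β V f ≠ ⊤) (n : ℕ) (x : X) :
    |(act P)^[n] f x - ∫ y, f y ∂μ| ≤
      α ^ n * ((osc β V f).toReal * (2 + β * V x + β * ∫ y, V y ∂μ)) := by
  rw [← integral_iterate_act_of_bind_eq hinv
    (integrable_iterate_act hβ hV0 hα hosc hμV hf hfosc) n, ← mul_assoc]
  exact abs_sub_integral_le_of_osc_le hβ hV0 hμV (measurable_iterate_act hf n)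
    (mul_nonneg (pow_nonneg hα n) ENNReal.toReal_nonneg) (osc_iterate_act_le hα hosc hf hfosc n) x

lemma osc_eq_zero_of_act_eq (hα : α < 1)
    (hosc : ∀ φ : X → ℝ, Measurable φ → osc β V φ < ⊤ →
      osc β V (act P φ) ≤ ENNReal.ofReal α * osc β V φ)
    {φ : X → ℝ} (hφ : Measurable φ) (hφosc : osc β V φ ≠ ⊤) (hfix : act P φ = φ) :
    osc β V φ = 0 := by
  by_contra hne
  have hlt : ENNReal.ofReal α * osc β V φ < osc β V φ := by
    simpa using ENNReal.mul_lt_mul_left hne hφosc (ENNReal.ofReal_lt_one.2 hα)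
  have := hosc φ hφ hφosc.lt_top
  rw [hfix] at this
  exact (this.trans_lt hlt).false

theorem exists_eq_add_const_of_sub_act_eq [IsFiniteKernel P] (hβ : 0 ≤ β)
    (hV0 : ∀ x, 0 ≤ V x) (hα : α < 1)
    (hosc : ∀ φ : X → ℝ, Measurable φ → osc β V φ < ⊤ →
      osc β V (act P φ) ≤ ENNReal.ofReal α * osc β V φ)
    (hPV : ∀ x, Integrable V (P x)) {u₁ u₂ g : X → ℝ} (hu₁ : Measurable u₁)
    (hu₂ : Measurable u₂) (ho₁ : osc β V u₁ ≠ ⊤) (ho₂ : osc β V u₂ ≠ ⊤)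
    (he₁ : ∀ x, u₁ x - act P u₁ x = g x) (he₂ : ∀ x, u₂ x - act P u₂ x = g x) :
    ∃ c, ∀ x, u₂ x = u₁ x + c := by
  set w := fun x => u₂ x - u₁ x with hw
  have hfix : act P w = w := funext fun x => by
    have hsub : act P w x = act P u₂ x - act P u₁ x :=
      integral_sub (integrable_of_osc_ne_top hβ hV0 (hPV x) hu₂ ho₂)
        (integrable_of_osc_ne_top hβ hV0 (hPV x) hu₁ ho₁)
    rw [hsub, hw]
    linarith [he₁ x, he₂ x]
  have hw0 : osc β V w = 0 := osc_eq_zero_of_act_eq hα hosc (hu₂.sub hu₁)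
    (ne_top_of_le_ne_top (ENNReal.add_ne_top.2 ⟨ho₂, ho₁⟩) (osc_sub_le hβ hV0 u₂ u₁)) hfix
  rcases isEmpty_or_nonempty X with hX | ⟨⟨x₀⟩⟩
  · exact ⟨0, isEmptyElim⟩
  refine ⟨w x₀, fun x => ?_⟩
  have := eq_of_osc_eq_zero hβ hV0 hw0 x x₀
  rw [hw] at this
  linarith

end Iterates

section GeometricDomination

variable {g : ℕ → X → ℝ} {b : X → ℝ} {α : ℝ}

omit [MeasurableSpace X] in
lemma summable_abs_of_abs_le_geometric (hα0 : 0 ≤ α) (hα1 : α < 1)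
    (hg : ∀ n x, |g n x| ≤ α ^ n * b x) (x : X) : Summable fun n => |g n x| :=
  .of_nonneg_of_le (fun _ => abs_nonneg _) (fun n => hg n x)
    ((summable_geometric_of_lt_one hα0 hα1).mul_right _)

omit [MeasurableSpace X] in
lemma abs_tsum_le_of_abs_le_geometric (hα0 : 0 ≤ α) (hα1 : α < 1)
    (hg : ∀ n x, |g n x| ≤ α ^ n * b x) (x : X) : |∑' n, g n x| ≤ b x / (1 - α) := by
  have hs : Summable fun n => ‖g n x‖ := summable_abs_of_abs_le_geometric hα0 hα1 hg x
  calc |∑' n, g n x| ≤ ∑' n, ‖g n x‖ := norm_tsum_le_tsum_norm hs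
    _ ≤ ∑' n, α ^ n * b x :=
        hs.tsum_le_tsum (fun n => hg n x) ((summable_geometric_of_lt_one hα0 hα1).mul_right (b x))
    _ = b x / (1 - α) := by
        rw [tsum_mul_right, tsum_geometric_of_lt_one hα0 hα1, inv_mul_eq_div]

lemma integral_tsum_of_abs_le_geometric (hα0 : 0 ≤ α) (hα1 : α < 1) {ν : Measure X}
    (hgm : ∀ n, AEStronglyMeasurable (g n) ν) (hb : Integrable b ν)
    (hg : ∀ n x, |g n x| ≤ α ^ n * b x) : ∫ x, ∑' n, g n x ∂ν = ∑' n, ∫ x, g n x ∂ν := by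
  have hint : ∀ n, Integrable (g n) ν := fun n =>
    (hb.const_mul (α ^ n)).mono' (hgm n) (ae_of_all _ (hg n))
  refine (integral_tsum_of_summable_integral_norm hint ?_).symm
  refine .of_nonneg_of_le (fun _ => integral_nonneg fun _ => norm_nonneg _) (fun n => ?_)
    ((summable_geometric_of_lt_one hα0 hα1).mul_right (∫ x, b x ∂ν))
  rw [← integral_const_mul]
  exact integral_mono (hint n).norm (hb.const_mul _) fun x =>
    (Real.norm_eq_abs _).trans_le (hg n x)

end GeometricDomination

def poissonSolution (P : Kernel X X) (μ : Measure X) (f : X → ℝ) (x : X) : ℝ :=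
  ∑' n : ℕ, ((act P)^[n] f x - ∫ y, f y ∂μ)

section PoissonSolution

variable {P : Kernel X X} {μ : Measure X} {f b : X → ℝ} {α : ℝ}

lemma integral_poissonSolution_eq_tsum (hα0 : 0 ≤ α) (hα1 : α < 1) {ν : Measure X}
    [IsProbabilityMeasure ν] (hint : ∀ n, Integrable ((act P)^[n] f) ν) (hb : Integrable b ν)
    (hbound : ∀ n x, |(act P)^[n] f x - ∫ y, f y ∂μ| ≤ α ^ n * b x) :
    ∫ x, poissonSolution P μ f x ∂ν = ∑' n, (∫ x, (act P)^[n] f x ∂ν - ∫ y, f y ∂μ) := by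
  simp only [poissonSolution]
  rw [integral_tsum_of_abs_le_geometric (g := fun n x => (act P)^[n] f x - ∫ y, f y ∂μ) hα0 hα1
    (fun n => ((hint n).sub (integrable_const _)).aestronglyMeasurable) hb hbound]
  refine tsum_congr fun n => ?_
  rw [integral_sub (hint n) (integrable_const _), integral_const, probReal_univ, one_smul]

lemma poissonSolution_sub_act [IsMarkovKernel P] (hα0 : 0 ≤ α) (hα1 : α < 1)
    (hint : ∀ n x, Integrable ((act P)^[n] f) (P x)) (hb : ∀ x, Integrable b (P x))
    (hbound : ∀ n x, |(act P)^[n] f x - ∫ y, f y ∂μ| ≤ α ^ n * b x) (x : X) :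
    poissonSolution P μ f x - act P (poissonSolution P μ f) x = f x - ∫ y, f y ∂μ := by
  have hact : act P (poissonSolution P μ f) x = ∑' n, ((act P)^[n + 1] f x - ∫ y, f y ∂μ) :=
    (integral_poissonSolution_eq_tsum hα0 hα1 (hint · x) (hb x) hbound).trans
      (tsum_congr fun n => by rw [Function.iterate_succ_apply']; rfl)
  rw [hact, poissonSolution,
    (summable_abs_of_abs_le_geometric hα0 hα1 hbound x).of_abs.tsum_eq_zero_add,
    Function.iterate_zero_apply]
  ring

lemma integral_poissonSolution_eq_zero [IsSFiniteKernel P] [IsProbabilityMeasure μ] (hα0 : 0 ≤ α)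
    (hα1 : α < 1) (hinv : μ.bind P = μ) (hint : ∀ n, Integrable ((act P)^[n] f) μ)
    (hb : Integrable b μ) (hbound : ∀ n x, |(act P)^[n] f x - ∫ y, f y ∂μ| ≤ α ^ n * b x) :
    ∫ x, poissonSolution P μ f x ∂μ = 0 := by
  simp [integral_poissonSolution_eq_tsum hα0 hα1 hint hb hbound,
    integral_iterate_act_of_bind_eq hinv hint]

end PoissonSolution

theorem poisson_equation_solution_general
    {X : Type*} [MeasurableSpace X] (V : X → ℝ) (hVmeas : Measurable V)
    (hV0 : ∀ x, 0 ≤ V x) (P : Kernel X X) [IsMarkovKernel P]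
    (γ K : ℝ) (hγ : γ ∈ Set.Ioo (0:ℝ) 1) (hK : 0 ≤ K) (hdrift : Drift P V γ K)
    (α β : ℝ) (hα : α ∈ Set.Ioo γ 1) (hβ : 0 < β)
    (hosc : ∀ φ : X → ℝ, Measurable φ → osc β V φ < ⊤ →
      osc β V (act P φ) ≤ ENNReal.ofReal α * osc β V φ)
    (μst : Measure X) [IsProbabilityMeasure μst] (hμint : Integrable V μst)
    (hμinv : μst.bind P = μst)
    (f : X → ℝ) (hf : Measurable f) (hffin : osc β V f < ⊤) :
    (∀ x, Summable fun n : ℕ => |(act P)^[n] f x - ∫ y, f y ∂μst|) ∧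
    (∀ x, (∑' n : ℕ, ((act P)^[n] f x - ∫ y, f y ∂μst))
        - act P (fun z => ∑' n : ℕ, ((act P)^[n] f z - ∫ y, f y ∂μst)) x
        = f x - ∫ y, f y ∂μst) ∧
    (∫ x, (∑' n : ℕ, ((act P)^[n] f x - ∫ y, f y ∂μst)) ∂μst = 0) ∧
    (∀ x, |∑' n : ℕ, ((act P)^[n] f x - ∫ y, f y ∂μst)| ≤
      (osc β V f).toReal * ((1 / (1 - α)) * (2 + β * V x + β * (K / (1 - γ))))) ∧
    (wnorm β V (fun x => ∑' n : ℕ, ((act P)^[n] f x - ∫ y, f y ∂μst)) ≤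
      ENNReal.ofReal ((1 / (1 - α)) * (2 + β * (K / (1 - γ)))) * osc β V f) ∧
    (∀ u₁ u₂ : X → ℝ, Measurable u₁ → Measurable u₂ →
      osc β V u₁ < ⊤ → osc β V u₂ < ⊤ →
      (∀ x, u₁ x - act P u₁ x = f x - ∫ y, f y ∂μst) →
      (∀ x, u₂ x - act P u₂ x = f x - ∫ y, f y ∂μst) →
      ∃ c : ℝ, ∀ x, u₂ x = u₁ x + c) := by
  obtain ⟨hγ0, hγ1⟩ := hγ
  obtain ⟨hγα, hα1⟩ := hα
  have hα0 : 0 ≤ α := hγ0.le.trans hγα.le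
  have hPV := integrable_of_drift hVmeas hV0 hdrift
  set C := (osc β V f).toReal with hC
  set M := K / (1 - γ)
  have hM : 0 ≤ M := div_nonneg hK (by linarith)
  have hmean : ∫ y, V y ∂μst ≤ M :=
    integral_le_div_of_drift hVmeas hV0 ⟨hγ0.le, hγ1⟩ hK hdrift hμint hμinv
  have hbound (n : ℕ) (x : X) :
      |(act P)^[n] f x - ∫ y, f y ∂μst| ≤ α ^ n * (C * (2 + β * V x + β * M)) :=
    (abs_iterate_act_sub_integral_le hβ.le hV0 hα0 hosc hμint hμinv hf hffin.ne n x).trans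
      (by gcongr)
  have hint {ν : Measure X} [IsFiniteMeasure ν] (hν : Integrable V ν) :=
    integrable_iterate_act hβ.le hV0 hα0 hosc hν hf hffin.ne
  have hb {ν : Measure X} [IsFiniteMeasure ν] (hν : Integrable V ν) :
      Integrable (fun x => C * (2 + β * V x + β * M)) ν :=
    (((integrable_const _).add (hν.const_mul β)).add (integrable_const _)).const_mul C
  have hu (x : X) : |poissonSolution P μst f x| ≤ C * (1 / (1 - α) * (2 + β * V x + β * M)) :=
    (abs_tsum_le_of_abs_le_geometric hα0 hα1 hbound x).trans_eq (by ring)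
  refine ⟨summable_abs_of_abs_le_geometric hα0 hα1 hbound,
    poissonSolution_sub_act hα0 hα1 (fun n x => hint (hPV x) n) (fun x => hb (hPV x)) hbound,
    integral_poissonSolution_eq_zero hα0 hα1 hμinv (hint hμint) (hb hμint) hbound, hu, ?_,
    fun u₁ u₂ hu₁ hu₂ ho₁ ho₂ he₁ he₂ => exists_eq_add_const_of_sub_act_eq hβ.le hV0 hα1 hosc hPV
      hu₁ hu₂ ho₁.ne ho₂.ne he₁ he₂⟩
  calc wnorm β V (poissonSolution P μst f)
      ≤ ENNReal.ofReal (C / (1 - α) * (2 + β * M)) :=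
        wnorm_le_ofReal_mul hβ.le hV0 (div_nonneg ENNReal.toReal_nonneg (by linarith))
          (by nlinarith) fun x => (hu x).trans_eq (by ring)
    _ = ENNReal.ofReal (1 / (1 - α) * (2 + β * M)) * osc β V f := by
        rw [← ENNReal.ofReal_toReal hffin.ne, ← ENNReal.ofReal_mul (by positivity), ← hC]
        ring_nf

/-- Existence, uniqueness (up to constants) and bounds for the solution of
the Poisson equation. -/
theorem poisson_equation_solution
    {X : Type*} [MeasurableSpace X] (V : X → ℝ) (hVmeas : Measurable V)
    (hV0 : ∀ x, 0 ≤ V x) (P : Kernel X X) [IsMarkovKernel P]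
    (γ K : ℝ) (hγ : γ ∈ Set.Ioo (0:ℝ) 1) (hK : 0 ≤ K) (hdrift : Drift P V γ K)
    (α β : ℝ) (hα : α ∈ Set.Ioo γ 1) (hβ : 0 < β)
    (hosc : ∀ φ : X → ℝ, Measurable φ → osc β V φ < ⊤ →
      osc β V (act P φ) ≤ ENNReal.ofReal α * osc β V φ)
    (hsig : ∀ (μ₁ μ₂ : Measure X) [IsProbabilityMeasure μ₁] [IsProbabilityMeasure μ₂],
      Integrable V μ₁ → Integrable V μ₂ →
      sigmaB β V (μ₁.bind P) (μ₂.bind P) ≤ α * sigmaB β V μ₁ μ₂)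
    (μst : Measure X) [IsProbabilityMeasure μst] (hμint : Integrable V μst)
    (hμinv : μst.bind P = μst)
    (f : X → ℝ) (hf : Measurable f) (hffin : osc β V f < ⊤) :
    (∀ x, Summable fun n : ℕ => |(act P)^[n] f x - ∫ y, f y ∂μst|) ∧
    (∀ x, (∑' n : ℕ, ((act P)^[n] f x - ∫ y, f y ∂μst))
        - act P (fun z => ∑' n : ℕ, ((act P)^[n] f z - ∫ y, f y ∂μst)) x
        = f x - ∫ y, f y ∂μst) ∧
    (∫ x, (∑' n : ℕ, ((act P)^[n] f x - ∫ y, f y ∂μst)) ∂μst = 0) ∧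
    (∀ x, |∑' n : ℕ, ((act P)^[n] f x - ∫ y, f y ∂μst)| ≤
      (osc β V f).toReal * ((1 / (1 - α)) * (2 + β * V x + β * (K / (1 - γ))))) ∧
    (wnorm β V (fun x => ∑' n : ℕ, ((act P)^[n] f x - ∫ y, f y ∂μst)) ≤
      ENNReal.ofReal ((1 / (1 - α)) * (2 + β * (K / (1 - γ)))) * osc β V f) ∧
    (∀ u₁ u₂ : X → ℝ, Measurable u₁ → Measurable u₂ →
      osc β V u₁ < ⊤ → osc β V u₂ < ⊤ →
      (∀ x, u₁ x - act P u₁ x = f x - ∫ y, f y ∂μst) →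
      (∀ x, u₂ x - act P u₂ x = f x - ∫ y, f y ∂μst) →
      ∃ c : ℝ, ∀ x, u₂ x = u₁ x + c) :=
  poisson_equation_solution_general V hVmeas hV0 P γ K hγ hK hdrift α β hα hβ hosc μst hμint hμinv f
    hf hffin

end PoissonPaper
end
end
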